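/- arXiv:1703.06775 — 3 statements merged into one kernel-verified Lean document; each statement's English description precedes it below -/
import Mathlib

section
/- If for some p ∈ [1,∞), some S ⊂ G, and some S-admissible weight ω there exists an S-dense vector in L^p(G,ω), then G is not compact. -/
open MeasureTheory ENNReal

noncomputable section

variable {G : Type*}

/-- Weighted `L^p` norm of `f` with respect to the weight `ω`. -/
def wNormP [MeasurableSpace G] (μ : Measure G) (p : ℝ) (ω : G → ℝ) (f : G → ℂ) : ℝ≥0∞ :=
  (∫⁻ t, (‖f t‖₊ * ENNReal.ofReal (ω t)) ^ p ∂μ) ^ (1 / p)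

/-- Left translation operator `(T_s f)(t) = f(s⁻¹ t)`. -/
def transl [Group G] (s : G) (f : G → ℂ) : G → ℂ := fun t => f (s⁻¹ * t)

/-- `ω` is a weight: measurable, strictly positive, locally `p`-summable. -/
def IsWeight [MeasurableSpace G] [TopologicalSpace G] (μ : Measure G) (p : ℝ) (ω : G → ℝ) :
    Prop :=
  Measurable ω ∧ (∀ t, 0 < ω t) ∧
    ∀ K : Set G, IsCompact K → ∫⁻ t in K, ENNReal.ofReal (ω t) ^ p ∂μ < ⊤

/-- The translation `T_s` is a bounded operator on `L^p(G,ω)`. -/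
def BoundedTransl [MeasurableSpace G] [Group G] (μ : Measure G) (p : ℝ) (ω : G → ℝ)
    (s : G) : Prop :=
  ∃ C : ℝ≥0∞, C < ⊤ ∧ ∀ f : G → ℂ, Measurable f →
    wNormP μ p ω (transl s f) ≤ C * wNormP μ p ω f

/-- `x` is an `S`-dense vector in `L^p(G,ω)`: its `S`-orbit is dense. -/
def SDenseVec [MeasurableSpace G] [Group G] (μ : Measure G) (p : ℝ) (ω : G → ℝ)
    (S : Set G) (x : G → ℂ) : Prop :=
  Measurable x ∧ wNormP μ p ω x < ⊤ ∧
    ∀ g : G → ℂ, Measurable g → wNormP μ p ω g < ⊤ → ∀ ε : ℝ, 0 < ε →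
      ∃ s ∈ S, wNormP μ p ω (fun t => transl s x t - g t) < ENNReal.ofReal ε

theorem stmt2 [Group G] [TopologicalSpace G] [IsTopologicalGroup G] [LocallyCompactSpace G]
    [MeasurableSpace G] [BorelSpace G] (μ : Measure G) [μ.IsHaarMeasure]
    (p : ℝ) (hp : 1 ≤ p) (S : Set G) (ω : G → ℝ) (hω : IsWeight μ p ω)
    (hadm : ∀ s ∈ S, BoundedTransl μ p ω s)
    (x : G → ℂ) (hx : SDenseVec μ p ω S x) :
    ¬ CompactSpace G := by
  intro hc
  obtain ⟨hωm, hωpos, hωint⟩ := hω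
  obtain ⟨hxm, hxfin, hdense⟩ := hx
  have hp0 : (0:ℝ) < p := lt_of_lt_of_le one_pos hp
  set W : G → ℝ≥0∞ := fun t => ENNReal.ofReal (ω t) with hWdef
  have hWm : Measurable W := ENNReal.measurable_ofReal.comp hωm
  have hI : ∫⁻ t, W t ^ p ∂μ < ⊤ := by
    simpa [setLIntegral_univ] using hωint Set.univ isCompact_univ
  have hμfin : μ Set.univ < ⊤ := isCompact_univ.measure_lt_top
  have hμpos : 0 < μ Set.univ := isOpen_univ.measure_pos μ ⟨1, trivial⟩
  set Q : ℝ≥0∞ := μ Set.univ / 4 with hQdef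
  have hQpos : 0 < Q := ENNReal.div_pos hμpos.ne' (by norm_num)
  have hQfin : Q < ⊤ := ENNReal.div_lt_top hμfin.ne (by norm_num)
  -- Step 1: find η > 0 with μ {ω < η} < Q
  have hη : ∃ η : ℝ, 0 < η ∧ μ {t | ω t < η} < Q := by
    have hmeas : ∀ n : ℕ, NullMeasurableSet {t | ω t < 1 / (n + 1 : ℝ)} μ :=
      fun n => (measurableSet_lt hωm measurable_const).nullMeasurableSet
    have hmono : ∀ i k : ℕ, i ≤ k →
        {t | ω t < 1 / (k + 1 : ℝ)} ⊆ {t | ω t < 1 / (i + 1 : ℝ)} := by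
      intro i k hik t ht
      simp only [Set.mem_setOf_eq] at ht ⊢
      refine lt_of_lt_of_le ht (one_div_le_one_div_of_le (by positivity) ?_)
      exact add_le_add_left (Nat.cast_le.mpr hik) 1
    have hdir : Directed (· ⊇ ·) (fun n : ℕ => {t | ω t < 1 / (n + 1 : ℝ)}) :=
      fun i j => ⟨max i j, hmono i _ (le_max_left _ _), hmono j _ (le_max_right _ _)⟩
    have hempty : (⋂ n : ℕ, {t | ω t < 1 / (n + 1 : ℝ)}) = ∅ := by
      ext t
      simp only [Set.mem_iInter, Set.mem_setOf_eq, Set.mem_empty_iff_false, iff_false, not_forall,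
        not_lt]
      obtain ⟨n, hn⟩ := exists_nat_one_div_lt (hωpos t)
      exact ⟨n, hn.le⟩
    have := Directed.measure_iInter hmeas hdir ⟨0, (lt_of_le_of_lt (measure_mono (Set.subset_univ _)) hμfin).ne⟩
    rw [hempty, measure_empty] at this
    have hlt : (⨅ n : ℕ, μ {t | ω t < 1 / (n + 1 : ℝ)}) < Q := lt_of_le_of_lt this.ge hQpos
    obtain ⟨n, hn⟩ := iInf_lt_iff.mp hlt
    exact ⟨1 / (n + 1 : ℝ), by positivity, hn⟩
  obtain ⟨η, hηpos, hημ⟩ := hη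
  -- Step 2: find r > 0 with (ofReal r) ^ p ≤ Q
  have hr : ∃ r : ℝ, 0 < r ∧ ENNReal.ofReal r ^ p ≤ Q := by
    set m : ℝ := Q.toReal with hmdef
    have hm : 0 < m := ENNReal.toReal_pos hQpos.ne' hQfin.ne
    have h0 : (0:ℝ) < min 1 m := lt_min one_pos hm
    refine ⟨(min 1 m) ^ (1 / p), Real.rpow_pos_of_pos h0 _, ?_⟩
    rw [ENNReal.ofReal_rpow_of_pos (Real.rpow_pos_of_pos h0 _), ← Real.rpow_mul h0.le,
      one_div, inv_mul_cancel₀ hp0.ne', Real.rpow_one]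
    calc ENNReal.ofReal (min 1 m) ≤ ENNReal.ofReal m := ENNReal.ofReal_le_ofReal (min_le_right _ _)
      _ = Q := ENNReal.ofReal_toReal hQfin.ne
  obtain ⟨r, hrpos, hrQ⟩ := hr
  -- the key claim
  set B : ℕ → Set G := fun n => {u | (n : ℝ) ≤ ‖x u‖} with hBdef
  have hBmeas : ∀ n, MeasurableSet (B n) := fun n =>
    measurableSet_le measurable_const hxm.norm
  have key : ∀ n : ℕ, Q * 2 ≤ μ (B n) := by
    intro n
    set c : ℝ := (n : ℝ) + 2 with hcdef
    have hcpos : 0 < c := by positivity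
    have hgfin : wNormP μ p ω (fun _ => (c : ℂ)) < ⊤ := by
      have : wNormP μ p ω (fun _ => (c : ℂ))
          = ((‖(c:ℂ)‖₊ : ℝ≥0∞) ^ p * ∫⁻ t, W t ^ p ∂μ) ^ (1 / p) := by
        rw [wNormP, ← lintegral_const_mul _ ((hWm.pow (measurable_const : Measurable fun _ : G => p)))]
        congr 1
        refine lintegral_congr fun t => ?_
        rw [ENNReal.mul_rpow_of_nonneg _ _ hp0.le]
      rw [this]
      refine ENNReal.rpow_lt_top_of_nonneg (by positivity) ?_
      exact (ENNReal.mul_lt_top (ENNReal.rpow_lt_top_of_nonneg hp0.le coe_ne_top) hI).ne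
    obtain ⟨s, hsS, hclose⟩ := hdense (fun _ => (c : ℂ)) measurable_const hgfin
      (η * r) (mul_pos hηpos hrpos)
    -- J bound
    set J : ℝ≥0∞ := ∫⁻ t, (‖x (s⁻¹ * t) - c‖₊ * W t) ^ p ∂μ with hJdef
    have hJm : Measurable fun t => (‖x (s⁻¹ * t) - (c:ℂ)‖₊ * W t : ℝ≥0∞) ^ p := by
      refine Measurable.pow_const ?_ p
      exact (measurable_coe_nnreal_ennreal.comp
        (((hxm.comp (measurable_const_mul s⁻¹)).sub measurable_const).nnnorm)).mul hWm
    have hJle : J ≤ ENNReal.ofReal (η * r) ^ p := by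
      have h1 : J ^ (1/p) ≤ ENNReal.ofReal (η * r) := le_of_lt (by exact hclose)
      have h2 := ENNReal.rpow_le_rpow h1 hp0.le
      rwa [← ENNReal.rpow_mul, one_div, inv_mul_cancel₀ hp0.ne', ENNReal.rpow_one] at h2
    -- D bound
    set D : Set G := {t | (1:ℝ) ≤ ‖x (s⁻¹ * t) - (c:ℂ)‖} ∩ {t | η ≤ ω t} with hDdef
    have hDle : ENNReal.ofReal η ^ p * μ D ≤ J := by
      calc ENNReal.ofReal η ^ p * μ D = ∫⁻ _ in D, ENNReal.ofReal η ^ p ∂μ := by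
            rw [setLIntegral_const]
        _ ≤ ∫⁻ t in D, (‖x (s⁻¹ * t) - (c:ℂ)‖₊ * W t) ^ p ∂μ := by
            refine setLIntegral_mono hJm fun t ht => ?_
            obtain ⟨ht1, ht2⟩ := ht
            refine ENNReal.rpow_le_rpow ?_ hp0.le
            have e1 : (1:ℝ≥0∞) ≤ (‖x (s⁻¹ * t) - (c:ℂ)‖₊ : ℝ≥0∞) := by
              rw [← ENNReal.ofReal_coe_nnreal, coe_nnnorm, ← ENNReal.ofReal_one]
              exact ENNReal.ofReal_le_ofReal ht1
            have e2 : ENNReal.ofReal η ≤ W t := ENNReal.ofReal_le_ofReal ht2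
            calc ENNReal.ofReal η = 1 * ENNReal.ofReal η := (one_mul _).symm
              _ ≤ _ := mul_le_mul' e1 e2
        _ ≤ J := setLIntegral_le_lintegral _ _
    have hDQ : μ D ≤ Q := by
      have hne0 : ENNReal.ofReal η ^ p ≠ 0 :=
        (ENNReal.rpow_pos (ENNReal.ofReal_pos.mpr hηpos) ENNReal.ofReal_ne_top).ne'
      have hnetop : ENNReal.ofReal η ^ p ≠ ⊤ :=
        ENNReal.rpow_ne_top_of_nonneg hp0.le ENNReal.ofReal_ne_top
      have hJle' : J ≤ ENNReal.ofReal η ^ p * Q := by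
        refine hJle.trans ?_
        rw [ENNReal.ofReal_mul hηpos.le, ENNReal.mul_rpow_of_nonneg _ _ hp0.le]
        exact mul_le_mul_right hrQ _
      exact (ENNReal.mul_le_mul_iff_right hne0 hnetop).mp (hDle.trans hJle')
    -- covering
    have hcover : (Set.univ : Set G) ⊆ D ∪ {t | ω t < η} ∪ ((fun t => s⁻¹ * t) ⁻¹' B n) := by
      intro t _
      by_cases h2 : η ≤ ω t
      · by_cases h1 : (1:ℝ) ≤ ‖x (s⁻¹ * t) - (c:ℂ)‖
        · exact Or.inl (Or.inl ⟨h1, h2⟩)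
        · push_neg at h1
          have h3 : ‖(c:ℂ)‖ - ‖x (s⁻¹ * t)‖ ≤ ‖x (s⁻¹ * t) - (c:ℂ)‖ := by
            rw [norm_sub_rev]
            exact norm_sub_norm_le _ _
          have h4 : ‖(c:ℂ)‖ = c := by
            rw [Complex.norm_real]
            exact abs_of_pos hcpos
          have h5 : (n:ℝ) ≤ ‖x (s⁻¹ * t)‖ := by
            have : (c:ℝ) = (n:ℝ) + 2 := hcdef
            linarith
          exact Or.inr h5
      · exact Or.inl (Or.inr (by simpa using not_le.mp h2))
    have hμcover : μ Set.univ ≤ Q + Q + μ (B n) := by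
      calc μ Set.univ ≤ μ (D ∪ {t | ω t < η} ∪ ((fun t => s⁻¹ * t) ⁻¹' B n)) :=
            measure_mono hcover
        _ ≤ μ (D ∪ {t | ω t < η}) + μ ((fun t => s⁻¹ * t) ⁻¹' B n) := measure_union_le _ _
        _ ≤ μ D + μ {t | ω t < η} + μ ((fun t => s⁻¹ * t) ⁻¹' B n) := by
            gcongr; exact measure_union_le _ _
        _ ≤ Q + Q + μ (B n) := by
            rw [measure_preimage_mul]
            exact add_le_add (add_le_add hDQ hημ.le) le_rfl
    have huniv : μ Set.univ = Q * 4 := by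
      rw [hQdef, ENNReal.div_mul_cancel (by norm_num) (by norm_num)]
    rw [huniv] at hμcover
    have h4 : Q * 4 = Q * 2 + Q * 2 := by rw [← mul_add]; norm_num
    have hQQ : Q + Q = Q * 2 := (mul_two Q).symm
    rw [h4, hQQ] at hμcover
    have := tsub_le_iff_left.mpr hμcover
    rwa [ENNReal.add_sub_cancel_left (by
      exact ENNReal.mul_ne_top hQfin.ne (by norm_num))] at this
  -- conclusion
  have hBempty : (⋂ n, B n) = ∅ := by
    ext u
    simp only [Set.mem_iInter, hBdef, Set.mem_setOf_eq, Set.mem_empty_iff_false, iff_false,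
      not_forall, not_le]
    exact exists_nat_gt ‖x u‖
  have hBmono : ∀ i k : ℕ, i ≤ k → B k ⊆ B i := by
    intro i k hik t ht
    have h1 : (k:ℝ) ≤ ‖x t‖ := ht
    show (i:ℝ) ≤ ‖x t‖
    exact le_trans (Nat.cast_le.mpr hik) h1
  have hBdir : Directed (· ⊇ ·) B :=
    fun i j => ⟨max i j, hBmono i _ (le_max_left _ _), hBmono j _ (le_max_right _ _)⟩
  have hiInf := Directed.measure_iInter (fun n => (hBmeas n).nullMeasurableSet) hBdir
    ⟨0, (lt_of_le_of_lt (measure_mono (Set.subset_univ _)) hμfin).ne⟩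
  rw [hBempty, measure_empty] at hiInf
  have : Q * 2 ≤ 0 := hiInf ▸ le_iInf key
  have hQ2 : (0:ℝ≥0∞) < Q * 2 := ENNReal.mul_pos hQpos.ne' (by norm_num)
  exact absurd (le_antisymm this zero_le) hQ2.ne'
end
end

section
/- Let G be a non-compact second countable locally compact group, S ⊂ G, and ω an S-admissible weight. Suppose that for every compact set K ⊂ G of positive measure and every ε, δ > 0 there exist s ∈ S and a compact E ⊂ K with μ(K \ E) < δ and ess sup over sE ∪ s⁻¹E of ω less than ε. Then L^p(G,ω) contains an S-dense vector. -/
open MeasureTheory ENNReal Pointwise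

noncomputable section

variable {G : Type*}

namespace SDV

open Filter Topology

variable [MeasurableSpace G] (μ : Measure G) (p : ℝ) (ω : G → ℝ)

/-- The `p`-th power of the weighted norm. -/
def Phi (f : G → ℂ) : ℝ≥0∞ := ∫⁻ t, ((‖f t‖₊ : ℝ≥0∞) * ENNReal.ofReal (ω t)) ^ p ∂μ

lemma wNormP_def (f : G → ℂ) : wNormP μ p ω f = (Phi μ p ω f) ^ (1/p) := rfl

variable {μ p ω}

lemma phi_mono {f g : G → ℂ} (hp : 0 ≤ p) (h : ∀ t, ‖f t‖ ≤ ‖g t‖) :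
    Phi μ p ω f ≤ Phi μ p ω g := by
  refine lintegral_mono fun t => ?_
  gcongr
  · have htt : ‖f t‖₊ ≤ ‖g t‖₊ := by
      rw [← norm_toNNReal, ← norm_toNNReal]; exact Real.toNNReal_mono (h t)
    exact htt

lemma wNormP_mono {f g : G → ℂ} (hp : 0 ≤ p) (h : ∀ t, ‖f t‖ ≤ ‖g t‖) :
    wNormP μ p ω f ≤ wNormP μ p ω g := by
  rw [wNormP_def, wNormP_def]
  exact ENNReal.rpow_le_rpow (phi_mono hp h) (by positivity)

lemma wNormP_le_of_phi_le {f : G → ℂ} {B : ℝ≥0∞} (hp : 0 < p) (h : Phi μ p ω f ≤ B ^ p) :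
    wNormP μ p ω f ≤ B := by
  rw [wNormP_def]
  calc (Phi μ p ω f) ^ (1/p) ≤ (B ^ p) ^ (1/p) := ENNReal.rpow_le_rpow h (by positivity)
  _ = B := by rw [← ENNReal.rpow_mul, mul_one_div, div_self hp.ne', ENNReal.rpow_one]

lemma phi_eq_wNormP_pow {f : G → ℂ} (hp : 0 < p) :
    Phi μ p ω f = (wNormP μ p ω f) ^ p := by
  rw [wNormP_def, ← ENNReal.rpow_mul, one_div, inv_mul_cancel₀ hp.ne', ENNReal.rpow_one]

lemma phi_lt_top_of_wNormP_lt_top {f : G → ℂ} (hp : 0 < p) (h : wNormP μ p ω f < ⊤) :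
    Phi μ p ω f < ⊤ := by
  rw [phi_eq_wNormP_pow hp]
  exact ENNReal.rpow_lt_top_of_nonneg hp.le h.ne

lemma wNormP_congr_norm {f g : G → ℂ} (h : ∀ t, ‖f t‖ = ‖g t‖) :
    wNormP μ p ω f = wNormP μ p ω g := by
  rw [wNormP_def, wNormP_def, Phi, Phi]
  congr 1
  refine lintegral_congr fun t => by rw [← norm_toNNReal, h t, norm_toNNReal]

lemma wNormP_add_le (hωm : Measurable ω) {f g : G → ℂ}
    (hf : Measurable f) (hg : Measurable g) (hp : 1 ≤ p) :
    wNormP μ p ω (fun t => f t + g t) ≤ wNormP μ p ω f + wNormP μ p ω g := by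
  have h0 : (0:ℝ) < p := lt_of_lt_of_le one_pos hp
  set φf : G → ℝ≥0∞ := fun t => (‖f t‖₊ : ℝ≥0∞) * ENNReal.ofReal (ω t) with hφf
  set φg : G → ℝ≥0∞ := fun t => (‖g t‖₊ : ℝ≥0∞) * ENNReal.ofReal (ω t) with hφg
  have step1 : wNormP μ p ω (fun t => f t + g t) ≤ (∫⁻ t, (φf t + φg t) ^ p ∂μ) ^ (1/p) := by
    rw [wNormP_def]
    refine ENNReal.rpow_le_rpow (lintegral_mono fun t => ?_) (by positivity)
    refine ENNReal.rpow_le_rpow ?_ h0.le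
    rw [hφf, hφg, ← add_mul]
    gcongr
    exact_mod_cast nnnorm_add_le (f t) (g t)
  have hφf : AEMeasurable φf μ :=
    ((hf.nnnorm.coe_nnreal_ennreal).mul (ENNReal.measurable_ofReal.comp hωm)).aemeasurable
  have hφg : AEMeasurable φg μ :=
    ((hg.nnnorm.coe_nnreal_ennreal).mul (ENNReal.measurable_ofReal.comp hωm)).aemeasurable
  exact step1.trans (ENNReal.lintegral_Lp_add_le hφf hφg hp)

lemma wNormP_sum_le (hωm : Measurable ω) (hp : 1 ≤ p) (v : ℕ → G → ℂ)
    (hv : ∀ n, Measurable (v n)) (m : ℕ) :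
    wNormP μ p ω (fun t => ∑ k ∈ Finset.range m, v k t) ≤
      ∑ k ∈ Finset.range m, wNormP μ p ω (v k) := by
  induction m with
  | zero =>
      have h0 : (0:ℝ) < p := lt_of_lt_of_le one_pos hp
      simp only [Finset.range_zero, Finset.sum_empty]
      rw [wNormP_def, Phi]
      simp only [nnnorm_zero, ENNReal.coe_zero, zero_mul]
      rw [lintegral_const, ENNReal.zero_rpow_of_pos h0, zero_mul,
        ENNReal.zero_rpow_of_pos (by positivity : (0:ℝ) < 1/p)]
  | succ m ih =>
      have h1 : wNormP μ p ω (fun t => ∑ k ∈ Finset.range (m+1), v k t)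
          = wNormP μ p ω (fun t => (∑ k ∈ Finset.range m, v k t) + v m t) := by
        congr 1; funext t; rw [Finset.sum_range_succ]
      rw [h1, Finset.sum_range_succ]
      refine le_trans (wNormP_add_le hωm ?_ (hv m) hp) (by gcongr)
      exact Finset.measurable_sum _ fun k _ => hv k

end SDV
namespace SDV
open Filter Topology
variable [MeasurableSpace G] {μ : Measure G} {p : ℝ} {ω : G → ℝ}

lemma lint_Lp_sum_le (hp : 1 ≤ p) (φ : ℕ → G → ℝ≥0∞) (hφ : ∀ n, Measurable (φ n)) (m : ℕ) :
    (∫⁻ t, (∑ k ∈ Finset.range m, φ k t) ^ p ∂μ) ^ (1/p) ≤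
      ∑ k ∈ Finset.range m, (∫⁻ t, (φ k t) ^ p ∂μ) ^ (1/p) := by
  have h0 : (0:ℝ) < p := lt_of_lt_of_le one_pos hp
  induction m with
  | zero =>
      simp only [Finset.range_zero, Finset.sum_empty]
      rw [lintegral_const, ENNReal.zero_rpow_of_pos h0, zero_mul,
        ENNReal.zero_rpow_of_pos (by positivity : (0:ℝ) < 1/p)]
  | succ m ih =>
      have h1 : ∀ t, (∑ k ∈ Finset.range (m+1), φ k t) =
          (∑ k ∈ Finset.range m, φ k t) + φ m t := fun t => Finset.sum_range_succ _ _
      simp only [h1, Finset.sum_range_succ]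
      refine le_trans (ENNReal.lintegral_Lp_add_le ?_ (hφ m).aemeasurable hp) (by gcongr)
      exact (Finset.measurable_sum _ fun k _ => hφ k).aemeasurable

lemma wNormP_le_tsum_of_ae_tendsto (hωm : Measurable ω) (hp : 1 ≤ p)
    (v : ℕ → G → ℂ) (hv : ∀ n, Measurable (v n)) (x : G → ℂ)
    (hx : ∀ᵐ t ∂μ, Tendsto (fun m => ∑ k ∈ Finset.range m, v k t) atTop (𝓝 (x t))) :
    wNormP μ p ω x ≤ ∑' n, wNormP μ p ω (v n) := by
  have h0 : (0:ℝ) < p := lt_of_lt_of_le one_pos hp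
  refine wNormP_le_of_phi_le h0 ?_
  have hpt : ∀ᵐ t ∂μ, ((‖x t‖₊ : ℝ≥0∞) * ENNReal.ofReal (ω t)) ^ p ≤
      liminf (fun m => ((‖∑ k ∈ Finset.range m, v k t‖₊ : ℝ≥0∞) *
        ENNReal.ofReal (ω t)) ^ p) atTop := by
    filter_upwards [hx] with t ht
    have h1 : Tendsto (fun m => ((‖∑ k ∈ Finset.range m, v k t‖₊ : ℝ≥0∞) *
        ENNReal.ofReal (ω t)) ^ p) atTop
        (𝓝 (((‖x t‖₊ : ℝ≥0∞) * ENNReal.ofReal (ω t)) ^ p)) := by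
      apply (ENNReal.continuous_rpow_const.tendsto _).comp
      apply ENNReal.Tendsto.mul_const ?_ (Or.inr ENNReal.ofReal_ne_top)
      exact ENNReal.tendsto_coe.2 ((continuous_nnnorm.tendsto _).comp ht)
    rw [h1.liminf_eq]
  calc Phi μ p ω x ≤ ∫⁻ t, liminf (fun m => ((‖∑ k ∈ Finset.range m, v k t‖₊ : ℝ≥0∞) *
        ENNReal.ofReal (ω t)) ^ p) atTop ∂μ := lintegral_mono_ae hpt
    _ ≤ liminf (fun m => Phi μ p ω (fun t => ∑ k ∈ Finset.range m, v k t)) atTop := by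
        refine lintegral_liminf_le fun m => ?_
        exact (((Finset.measurable_sum _ fun k _ => hv k).nnnorm.coe_nnreal_ennreal).mul
          (ENNReal.measurable_ofReal.comp hωm)).pow_const _
    _ ≤ (∑' n, wNormP μ p ω (v n)) ^ p := by
        refine liminf_le_of_frequently_le (Frequently.of_forall fun m => ?_)
        rw [phi_eq_wNormP_pow h0]
        refine ENNReal.rpow_le_rpow ?_ h0.le
        refine le_trans (wNormP_sum_le hωm hp v hv m) ?_
        exact ENNReal.sum_le_tsum _

lemma ae_summable (hωm : Measurable ω) (hwpos : ∀ t, 0 < ω t) (hp : 1 ≤ p)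
    (v : ℕ → G → ℂ) (hv : ∀ n, Measurable (v n))
    (hsum : ∑' n, wNormP μ p ω (v n) ≠ ⊤) :
    ∀ᵐ t ∂μ, ∃ l : ℂ, Tendsto (fun m => ∑ k ∈ Finset.range m, v k t) atTop (𝓝 l) := by
  have h0 : (0:ℝ) < p := lt_of_lt_of_le one_pos hp
  set T : G → ℝ≥0∞ := fun t => ∑' n, (‖v n t‖₊ : ℝ≥0∞) with hT
  have hTm : Measurable fun t => (T t * ENNReal.ofReal (ω t)) ^ p := by
    refine ((Measurable.ennreal_tsum fun n => (hv n).nnnorm.coe_nnreal_ennreal).mul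
      (ENNReal.measurable_ofReal.comp hωm)).pow_const _
  have hint : ∫⁻ t, (T t * ENNReal.ofReal (ω t)) ^ p ∂μ ≤ (∑' n, wNormP μ p ω (v n)) ^ p := by
    have hpt : ∀ t, (T t * ENNReal.ofReal (ω t)) ^ p ≤
        liminf (fun m => ((∑ k ∈ Finset.range m, (‖v k t‖₊ : ℝ≥0∞)) *
          ENNReal.ofReal (ω t)) ^ p) atTop := by
      intro t
      have h1 : Tendsto (fun m => ((∑ k ∈ Finset.range m, (‖v k t‖₊ : ℝ≥0∞)) *
          ENNReal.ofReal (ω t)) ^ p) atTop (𝓝 ((T t * ENNReal.ofReal (ω t)) ^ p)) := by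
        apply (ENNReal.continuous_rpow_const.tendsto _).comp
        exact ENNReal.Tendsto.mul_const (ENNReal.tendsto_nat_tsum _)
          (Or.inr ENNReal.ofReal_ne_top)
      rw [h1.liminf_eq]
    calc ∫⁻ t, (T t * ENNReal.ofReal (ω t)) ^ p ∂μ
        ≤ ∫⁻ t, liminf (fun m => ((∑ k ∈ Finset.range m, (‖v k t‖₊ : ℝ≥0∞)) *
          ENNReal.ofReal (ω t)) ^ p) atTop ∂μ := lintegral_mono hpt
      _ ≤ liminf (fun m => ∫⁻ t, ((∑ k ∈ Finset.range m, (‖v k t‖₊ : ℝ≥0∞)) *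
          ENNReal.ofReal (ω t)) ^ p ∂μ) atTop := by
          refine lintegral_liminf_le fun m => ?_
          exact ((Finset.measurable_sum _ fun k _ =>
            (hv k).nnnorm.coe_nnreal_ennreal).mul
            (ENNReal.measurable_ofReal.comp hωm)).pow_const _
      _ ≤ (∑' n, wNormP μ p ω (v n)) ^ p := by
          refine liminf_le_of_frequently_le (Frequently.of_forall fun m => ?_)
          have key := lint_Lp_sum_le (μ := μ) hp
            (fun k t => (‖v k t‖₊ : ℝ≥0∞) * ENNReal.ofReal (ω t))
            (fun k => ((hv k).nnnorm.coe_nnreal_ennreal).mul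
              (ENNReal.measurable_ofReal.comp hωm)) m
          have e1 : ∀ t, ((∑ k ∈ Finset.range m, (‖v k t‖₊ : ℝ≥0∞)) * ENNReal.ofReal (ω t))
              = ∑ k ∈ Finset.range m, (‖v k t‖₊ : ℝ≥0∞) * ENNReal.ofReal (ω t) := fun t =>
            Finset.sum_mul _ _ _
          simp only [e1]
          have key2 := ENNReal.rpow_le_rpow key h0.le
          rw [← ENNReal.rpow_mul, one_div, inv_mul_cancel₀ h0.ne', ENNReal.rpow_one] at key2
          refine key2.trans (ENNReal.rpow_le_rpow ?_ h0.le)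
          simp only [← one_div]
          exact ENNReal.sum_le_tsum _
  have hae : ∀ᵐ t ∂μ, (T t * ENNReal.ofReal (ω t)) ^ p < ⊤ :=
    ae_lt_top hTm (lt_of_le_of_lt hint
      (ENNReal.rpow_lt_top_of_nonneg h0.le hsum)).ne
  filter_upwards [hae] with t ht
  have h2 : T t ≠ ⊤ := by
    intro hTt
    rw [hTt] at ht
    have hw : ENNReal.ofReal (ω t) ≠ 0 := by
      simp only [ne_eq, ENNReal.ofReal_eq_zero, not_le]
      exact hwpos t
    rw [ENNReal.top_mul hw] at ht
    simp [ENNReal.top_rpow_of_pos h0] at ht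
  have h3 : Summable fun n => ‖v n t‖₊ := ENNReal.tsum_coe_ne_top_iff_summable.1 h2
  exact ⟨∑' n, v n t, (Summable.of_nnnorm h3).hasSum.tendsto_sum_nat⟩

end SDV
namespace SDV
open Filter Topology Pointwise
variable [MeasurableSpace G] {μ : Measure G} {p : ℝ} {ω : G → ℝ}

lemma nnnorm_le_ofReal {z : ℂ} {M : ℝ} (h : ‖z‖ ≤ M) :
    (‖z‖₊ : ℝ≥0∞) ≤ ENNReal.ofReal M := by
  rw [← enorm_eq_nnnorm, ← ofReal_norm]
  exact ENNReal.ofReal_le_ofReal h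

lemma phi_le_of_support (hp : 0 < p) {f : G → ℂ} {M : ℝ} {A : Set G}
    (hA : MeasurableSet A) (hM : ∀ t, ‖f t‖ ≤ M) (h0 : ∀ t ∉ A, f t = 0) :
    Phi μ p ω f ≤ ENNReal.ofReal M ^ p * ∫⁻ t in A, (ENNReal.ofReal (ω t)) ^ p ∂μ := by
  have key : ∀ t, ((‖f t‖₊ : ℝ≥0∞) * ENNReal.ofReal (ω t)) ^ p ≤
      A.indicator (fun t => ENNReal.ofReal M ^ p * (ENNReal.ofReal (ω t)) ^ p) t := by
    intro t
    by_cases ht : t ∈ A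
    · rw [Set.indicator_of_mem ht, ← ENNReal.mul_rpow_of_nonneg _ _ hp.le]
      exact ENNReal.rpow_le_rpow (by gcongr; exact nnnorm_le_ofReal (hM t)) hp.le
    · rw [Set.indicator_of_notMem ht, h0 t ht]
      simp [ENNReal.zero_rpow_of_pos hp]
  calc Phi μ p ω f ≤ ∫⁻ t, A.indicator
        (fun t => ENNReal.ofReal M ^ p * (ENNReal.ofReal (ω t)) ^ p) t ∂μ :=
      lintegral_mono key
    _ = ∫⁻ t in A, ENNReal.ofReal M ^ p * (ENNReal.ofReal (ω t)) ^ p ∂μ :=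
      lintegral_indicator hA _
    _ = ENNReal.ofReal M ^ p * ∫⁻ t in A, (ENNReal.ofReal (ω t)) ^ p ∂μ :=
      lintegral_const_mul' _ _ (ENNReal.rpow_ne_top_of_nonneg hp.le ENNReal.ofReal_ne_top)

variable [Group G] [MeasurableMul G]

lemma smul_set_measurable {A : Set G} (hA : MeasurableSet A) (s : G) :
    MeasurableSet (s • A) := by
  have : s • A = (fun z => s⁻¹ * z) ⁻¹' A := by
    ext z
    simp [Set.mem_smul_set_iff_inv_smul_mem, smul_eq_mul]
  rw [this]
  exact (measurable_const_mul s⁻¹) hA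

lemma phi_transl [Measure.IsMulLeftInvariant μ] (s : G) (f : G → ℂ) :
    Phi μ p ω (transl s f) = ∫⁻ y, ((‖f y‖₊ : ℝ≥0∞) * ENNReal.ofReal (ω (s * y))) ^ p ∂μ := by
  have h := lintegral_mul_left_eq_self (μ := μ)
    (fun t => ((‖f (s⁻¹ * t)‖₊ : ℝ≥0∞) * ENNReal.ofReal (ω t)) ^ p) s
  rw [Phi]
  simp only [transl]
  rw [← h]
  simp [inv_mul_cancel_left]

lemma phi_transl_le [Measure.IsMulLeftInvariant μ] (hp : 0 < p) (s : G) {f : G → ℂ} {M : ℝ}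
    {A : Set G} (hA : MeasurableSet A) (hM : ∀ t, ‖f t‖ ≤ M) (h0 : ∀ t ∉ A, f t = 0) :
    Phi μ p ω (transl s f) ≤
      ENNReal.ofReal M ^ p * ∫⁻ z in s • A, (ENNReal.ofReal (ω z)) ^ p ∂μ := by
  rw [phi_transl s f]
  have key : ∀ y, ((‖f y‖₊ : ℝ≥0∞) * ENNReal.ofReal (ω (s * y))) ^ p ≤
      ENNReal.ofReal M ^ p * ((s • A).indicator
        (fun z => (ENNReal.ofReal (ω z)) ^ p) (s * y)) := by
    intro y
    by_cases hy : y ∈ A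
    · have hmem : s * y ∈ s • A := by
        rw [← smul_eq_mul]; exact Set.smul_mem_smul_set_iff.2 hy
      rw [Set.indicator_of_mem hmem, ← ENNReal.mul_rpow_of_nonneg _ _ hp.le]
      exact ENNReal.rpow_le_rpow (by gcongr; exact nnnorm_le_ofReal (hM y)) hp.le
    · rw [h0 y hy]
      simp [ENNReal.zero_rpow_of_pos hp]
  calc ∫⁻ y, ((‖f y‖₊ : ℝ≥0∞) * ENNReal.ofReal (ω (s * y))) ^ p ∂μ
      ≤ ∫⁻ y, ENNReal.ofReal M ^ p * ((s • A).indicator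
        (fun z => (ENNReal.ofReal (ω z)) ^ p) (s * y)) ∂μ := lintegral_mono key
    _ = ENNReal.ofReal M ^ p * ∫⁻ y, ((s • A).indicator
        (fun z => (ENNReal.ofReal (ω z)) ^ p) (s * y)) ∂μ :=
      lintegral_const_mul' _ _ (ENNReal.rpow_ne_top_of_nonneg hp.le ENNReal.ofReal_ne_top)
    _ = ENNReal.ofReal M ^ p * ∫⁻ z, ((s • A).indicator
        (fun z => (ENNReal.ofReal (ω z)) ^ p) z) ∂μ := by
      rw [lintegral_mul_left_eq_self (μ := μ)
        (fun z => (s • A).indicator (fun z => (ENNReal.ofReal (ω z)) ^ p) z) s]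
    _ = ENNReal.ofReal M ^ p * ∫⁻ z in s • A, (ENNReal.ofReal (ω z)) ^ p ∂μ := by
      rw [lintegral_indicator (smul_set_measurable hA s)]

omit [Group G] [MeasurableMul G] in
lemma setLintegral_w_le (hp : 0 < p) {A : Set G} {ε : ℝ}
    (hess : essSup (fun t => ENNReal.ofReal (ω t)) (μ.restrict A) ≤ ENNReal.ofReal ε) :
    ∫⁻ z in A, (ENNReal.ofReal (ω z)) ^ p ∂μ ≤ ENNReal.ofReal ε ^ p * μ A := by
  have h1 : ∀ᵐ z ∂(μ.restrict A), (ENNReal.ofReal (ω z)) ^ p ≤ ENNReal.ofReal ε ^ p := by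
    filter_upwards [ae_le_essSup (fun t => ENNReal.ofReal (ω t))] with z hz
    exact ENNReal.rpow_le_rpow (hz.trans hess) hp.le
  calc ∫⁻ z in A, (ENNReal.ofReal (ω z)) ^ p ∂μ
      ≤ ∫⁻ _ in A, ENNReal.ofReal ε ^ p ∂μ := lintegral_mono_ae h1
    _ = ENNReal.ofReal ε ^ p * μ A := setLIntegral_const _ _

end SDV
namespace SDV
open Filter Topology Pointwise
variable [MeasurableSpace G] {μ : Measure G} {p : ℝ} {ω : G → ℝ}

/-- A bounded measurable function vanishing outside a closed compact set. -/
def Nice [TopologicalSpace G] (x : G → ℂ) : Prop :=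
  Measurable x ∧ (∃ M : ℝ, ∀ t, ‖x t‖ ≤ M) ∧
    ∃ K : Set G, IsCompact K ∧ IsClosed K ∧ ∀ t ∉ K, x t = 0

lemma exists_nice_approx [TopologicalSpace G] [Group G] [IsTopologicalGroup G]
    [LocallyCompactSpace G] [SecondCountableTopology G] [BorelSpace G]
    (hωm : Measurable ω) (hp : 0 < p) {g : G → ℂ} (hg : Measurable g)
    (hfin : Phi μ p ω g < ⊤) {η : ℝ≥0∞} (hη : 0 < η) :
    ∃ b : G → ℂ, Nice b ∧ wNormP μ p ω (fun t => g t - b t) < η := by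
  set D : ℕ → Set G := fun j => closure (compactCovering G j) ∩ {t | ‖g t‖ ≤ (j:ℝ)} with hD
  have hDmeas : ∀ j, MeasurableSet (D j) := fun j =>
    (isClosed_closure.measurableSet).inter (measurableSet_le hg.norm measurable_const)
  set b : ℕ → G → ℂ := fun j => (D j).indicator g with hb
  have hFeq : ∀ j t, ((‖g t - b j t‖₊ : ℝ≥0∞) * ENNReal.ofReal (ω t)) ^ p
      = (D j)ᶜ.indicator (fun t => ((‖g t‖₊ : ℝ≥0∞) * ENNReal.ofReal (ω t)) ^ p) t := by
    intro j t
    by_cases ht : t ∈ D j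
    · rw [hb]
      simp [Set.indicator_of_mem ht, Set.indicator_of_notMem (by simpa using ht : t ∉ (D j)ᶜ),
        ENNReal.zero_rpow_of_pos hp]
    · rw [hb]
      simp [Set.indicator_of_notMem ht, Set.indicator_of_mem (by simpa using ht : t ∈ (D j)ᶜ)]
  have htendpt : ∀ t, Tendsto (fun j => ((‖g t - b j t‖₊ : ℝ≥0∞) * ENNReal.ofReal (ω t)) ^ p)
      atTop (𝓝 0) := by
    intro t
    obtain ⟨j1, hj1⟩ := exists_mem_compactCovering t
    obtain ⟨j2, hj2⟩ := exists_nat_ge ‖g t‖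
    refine tendsto_atTop_of_eventually_const (i₀ := max j1 j2) fun j hj => ?_
    have htD : t ∈ D j := by
      refine ⟨subset_closure (compactCovering_subset G ((le_max_left _ _).trans hj) hj1), ?_⟩
      exact hj2.trans (by exact_mod_cast (le_max_right j1 j2).trans hj)
    rw [hFeq, Set.indicator_of_notMem (by simpa using htD)]
  have hconv : Tendsto (fun j => Phi μ p ω (fun t => g t - b j t)) atTop (𝓝 0) := by
    have h0 : (0:ℝ≥0∞) = ∫⁻ _, 0 ∂μ := by simp
    rw [h0]
    refine tendsto_lintegral_of_dominated_convergence
      (fun t => ((‖g t‖₊ : ℝ≥0∞) * ENNReal.ofReal (ω t)) ^ p) (fun j => ?_) (fun j => ?_)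
      hfin.ne (ae_of_all _ fun t => htendpt t)
    · exact (((hg.sub (hg.indicator (hDmeas j))).nnnorm.coe_nnreal_ennreal).mul
        (ENNReal.measurable_ofReal.comp hωm)).pow_const _
    · exact ae_of_all _ fun t =>
        le_trans (le_of_eq (hFeq j t)) (Set.indicator_le_self _ _ t)
  have hηp : (0:ℝ≥0∞) < η ^ p := ENNReal.rpow_pos_of_nonneg hη hp.le
  have hev : ∀ᶠ j in atTop, Phi μ p ω (fun t => g t - b j t) < η ^ p :=
    hconv.eventually_lt_const hηp
  obtain ⟨j, hj⟩ := hev.exists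
  refine ⟨b j, ⟨hg.indicator (hDmeas j), ⟨(j:ℝ), fun t => ?_⟩,
    closure (compactCovering G j), (isCompact_compactCovering G j).closure,
    isClosed_closure, fun t ht => ?_⟩, ?_⟩
  · by_cases ht : t ∈ D j
    · show ‖(D j).indicator g t‖ ≤ (j:ℝ)
      rw [Set.indicator_of_mem ht]; exact ht.2
    · show ‖(D j).indicator g t‖ ≤ (j:ℝ)
      rw [Set.indicator_of_notMem ht]; simp
  · show (D j).indicator g t = 0
    exact Set.indicator_of_notMem (fun hmem => ht hmem.1) _
  · have : wNormP μ p ω (fun t => g t - b j t) < (η ^ p) ^ (1/p) := by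
      rw [wNormP_def]
      exact ENNReal.rpow_lt_rpow hj (by positivity)
    rwa [← ENNReal.rpow_mul, mul_one_div, div_self hp.ne', ENNReal.rpow_one] at this

end SDV
namespace SDV
open Filter Topology Pointwise
variable [MeasurableSpace G] {μ : Measure G} {p : ℝ} {ω : G → ℝ}

lemma wNormP_eq_eLpNorm (hωm : Measurable ω) (hp : 0 < p) {f : G → ℂ} (hf : Measurable f) :
    wNormP μ p ω f = eLpNorm f (ENNReal.ofReal p)
      (μ.withDensity fun t => (ENNReal.ofReal (ω t)) ^ p) := by
  have hq0 : ENNReal.ofReal p ≠ 0 := by simpa [ENNReal.ofReal_eq_zero] using hp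
  rw [eLpNorm_eq_lintegral_rpow_enorm_toReal hq0 ENNReal.ofReal_ne_top,
    ENNReal.toReal_ofReal hp.le,
    lintegral_withDensity_eq_lintegral_mul _ (hωm.ennreal_ofReal.pow_const _)
      (hf.enorm.pow_const _)]
  rw [wNormP_def, Phi]
  congr 1
  refine lintegral_congr fun t => ?_
  rw [ENNReal.mul_rpow_of_nonneg _ _ hp.le]
  exact mul_comm _ _

lemma exists_dense_seq [TopologicalSpace G] [BorelSpace G] [SecondCountableTopology G]
    [SFinite μ] (hωm : Measurable ω) (hp : 1 ≤ p) :
    ∃ gs : ℕ → G → ℂ, (∀ i, Measurable (gs i)) ∧ (∀ i, wNormP μ p ω (gs i) < ⊤) ∧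
      ∀ g : G → ℂ, Measurable g → wNormP μ p ω g < ⊤ → ∀ ε : ℝ, 0 < ε →
        ∃ i, wNormP μ p ω (fun t => g t - gs i t) < ENNReal.ofReal ε := by
  have h0 : (0:ℝ) < p := lt_of_lt_of_le one_pos hp
  set q : ℝ≥0∞ := ENNReal.ofReal p with hq
  set ν : Measure G := μ.withDensity fun t => (ENNReal.ofReal (ω t)) ^ p with hν
  haveI : Fact (1 ≤ q) := ⟨by simpa [hq] using ENNReal.ofReal_le_ofReal hp⟩
  haveI : Fact (q ≠ ∞) := ⟨ENNReal.ofReal_ne_top⟩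
  haveI : TopologicalSpace.SeparableSpace (Lp ℂ q ν) :=
    TopologicalSpace.SecondCountableTopology.to_separableSpace
  haveI : Nonempty (Lp ℂ q ν) := ⟨0⟩
  set d : ℕ → Lp ℂ q ν := TopologicalSpace.denseSeq (Lp ℂ q ν) with hd
  have hdense := TopologicalSpace.denseRange_denseSeq (Lp ℂ q ν)
  refine ⟨fun i => ⇑(d i), fun i => (Lp.stronglyMeasurable (d i)).measurable, fun i => ?_, ?_⟩
  · rw [wNormP_eq_eLpNorm hωm h0 (Lp.stronglyMeasurable (d i)).measurable]
    exact (Lp.eLpNorm_ne_top (d i)).lt_top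
  intro g hg hgfin ε hε
  have hmem : MemLp g q ν :=
    ⟨hg.aestronglyMeasurable, by rw [← wNormP_eq_eLpNorm hωm h0 hg]; exact hgfin⟩
  obtain ⟨i, hi⟩ := Metric.denseRange_iff.1 hdense (hmem.toLp g) ε hε
  refine ⟨i, ?_⟩
  have hb : wNormP μ p ω (fun t => g t - (d i : G → ℂ) t) = eLpNorm (fun t => g t - (d i : G → ℂ) t) q ν :=
    wNormP_eq_eLpNorm (μ := μ) hωm h0 (hg.sub (Lp.stronglyMeasurable (d i)).measurable)
  beta_reduce
  rw [hb]
  have he1 : eLpNorm (fun t => g t - (d i : G → ℂ) t) q ν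
      = eLpNorm (⇑(hmem.toLp g) - ⇑(d i)) q ν := by
    refine eLpNorm_congr_ae ?_
    filter_upwards [hmem.coeFn_toLp] with t ht
    simp [ht]
  rw [he1]
  have hne : eLpNorm (⇑(hmem.toLp g) - ⇑(d i)) q ν ≠ ⊤ := by
    rw [← eLpNorm_congr_ae (Lp.coeFn_sub (hmem.toLp g) (d i))]
    exact Lp.eLpNorm_ne_top _
  rw [ENNReal.lt_ofReal_iff_toReal_lt hne]
  rw [Lp.dist_def] at hi
  exact hi

end SDV
namespace SDV
open Filter Topology Pointwise

variable [Group G] [TopologicalSpace G] [IsTopologicalGroup G] [LocallyCompactSpace G]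
    [SecondCountableTopology G] [MeasurableSpace G] [BorelSpace G]
    {μ : Measure G} [μ.IsHaarMeasure] {p : ℝ} {S : Set G} {ω : G → ℝ}

lemma measure_smul_set (s : G) (A : Set G) : μ (s • A) = μ A := by
  have h : s • A = (fun z => s⁻¹ * z) ⁻¹' A := by
    ext z
    simp [Set.mem_smul_set_iff_inv_smul_mem, smul_eq_mul]
  rw [h, measure_preimage_mul]

lemma step_exists (hp : 1 ≤ p) (hω : IsWeight μ p ω)
    (hcond : ∀ K : Set G, IsCompact K → 0 < μ K → ∀ ε δ : ℝ, 0 < ε → 0 < δ →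
      ∃ s ∈ S, ∃ E : Set G, IsCompact E ∧ E ⊆ K ∧ μ (K \ E) < ENNReal.ofReal δ ∧
        essSup (fun t => ENNReal.ofReal (ω t)) (μ.restrict (s • E ∪ s⁻¹ • E))
          < ENNReal.ofReal ε)
    (g0 : G → ℂ) (hg0 : Measurable g0) (hg0fin : wNormP μ p ω g0 < ⊤)
    (x : G → ℂ) (hx : Nice x) (c : ℝ≥0∞) (hc : c < ⊤) (n : ℕ) :
    ∃ (x' : G → ℂ) (s : G), Nice x' ∧ s ∈ S ∧
      wNormP μ p ω (fun t => x' t - x t) ≤ (2⁻¹ : ℝ≥0∞) ^ n ∧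
      c * wNormP μ p ω (fun t => x' t - x t) ≤ (2⁻¹ : ℝ≥0∞) ^ n ∧
      wNormP μ p ω (fun t => transl s x' t - g0 t) ≤ 3 * (2⁻¹ : ℝ≥0∞) ^ n := by
  classical
  have h0 : (0:ℝ) < p := lt_of_lt_of_le one_pos hp
  have hωm : Measurable ω := hω.1
  obtain ⟨hxm, ⟨Mx, hMx⟩, Kx, hKxc, hKxcl, hKx0⟩ := hx
  -- half-power is positive and finite
  have hhalf0 : ((2⁻¹ : ℝ≥0∞)) ^ n ≠ 0 := pow_ne_zero n (by simp)
  have hhalft : ((2⁻¹ : ℝ≥0∞)) ^ n ≠ ⊤ := pow_ne_top (by simp)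
  -- approximate g0 by a nice function
  obtain ⟨b, hbN, hbg0⟩ := exists_nice_approx hωm h0 hg0
    (phi_lt_top_of_wNormP_lt_top h0 hg0fin)
    (pos_iff_ne_zero.2 hhalf0)
  obtain ⟨hbm, ⟨Mb, hMb⟩, Kb, hKbc, hKbcl, hKb0⟩ := hbN
  -- compact set of positive measure
  obtain ⟨U, hUc, hU1⟩ := exists_compact_mem_nhds (1 : G)
  set K : Set G := (closure U ∪ Kx) ∪ Kb with hK
  have hKc : IsCompact K := (hUc.closure.union hKxc).union hKbc
  have hKcl : IsClosed K := (isClosed_closure.union hKxcl).union hKbcl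
  have hKmeas : MeasurableSet K := hKcl.measurableSet
  have hKpos : 0 < μ K := by
    refine lt_of_lt_of_le (Measure.measure_pos_of_mem_nhds μ hU1) (measure_mono ?_)
    exact fun t ht => Or.inl (Or.inl (subset_closure ht))
  have hKfin : μ K < ⊤ := hKc.measure_lt_top
  -- the target quantity τ
  set τ : ℝ≥0∞ := (2⁻¹ : ℝ≥0∞) ^ n * (2 * (c+1))⁻¹ with hτ
  have hcc0 : (2 * (c+1)) ≠ 0 := by simp
  have hcct : (2 * (c+1)) ≠ ⊤ := by
    refine ENNReal.mul_ne_top (by simp) (ENNReal.add_ne_top.2 ⟨hc.ne, by simp⟩)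
  have hτ0 : τ ≠ 0 := by
    simp only [hτ, ne_eq, mul_eq_zero, hhalf0, ENNReal.inv_eq_zero, false_or]
    exact hcct
  have hτt : τ ≠ ⊤ := ENNReal.mul_ne_top hhalft (by simp [hcc0])
  have hτle : τ ≤ (2⁻¹ : ℝ≥0∞) ^ n := by
    rw [hτ]
    calc (2⁻¹ : ℝ≥0∞) ^ n * (2 * (c+1))⁻¹ ≤ (2⁻¹ : ℝ≥0∞) ^ n * 1 := by
          gcongr
          rw [ENNReal.inv_le_one]
          calc (1:ℝ≥0∞) = 1 * 1 := (one_mul 1).symm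
          _ ≤ 2 * (c+1) := by gcongr <;> simp
      _ = (2⁻¹ : ℝ≥0∞) ^ n := mul_one _
  -- bounds on functions
  set β : ℝ≥0∞ := ENNReal.ofReal (max Mx (max Mb 1)) with hβ
  have hβ1 : 1 ≤ β := by
    rw [hβ, show (1:ℝ≥0∞) = ENNReal.ofReal 1 by simp]
    exact ENNReal.ofReal_le_ofReal (le_max_of_le_right (le_max_right _ _))
  have hβ0 : β ≠ 0 := by
    intro h; rw [h] at hβ1; simp at hβ1
  have hβt : β ≠ ⊤ := ENNReal.ofReal_ne_top
  have hMxβ : ENNReal.ofReal Mx ≤ β := ENNReal.ofReal_le_ofReal (le_max_left _ _)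
  have hMbβ : ENNReal.ofReal Mb ≤ β :=
    ENNReal.ofReal_le_ofReal (le_max_of_le_right (le_max_left _ _))
  set Q : ℝ≥0∞ := μ K ^ (1/p) with hQ
  have hQ0 : Q ≠ 0 := by
    simp only [hQ, ne_eq, ENNReal.rpow_eq_zero_iff, not_or]
    constructor
    · rintro ⟨h1, -⟩; exact absurd h1 hKpos.ne'
    · rintro ⟨h1, -⟩; exact absurd h1 hKfin.ne
  have hQt : Q ≠ ⊤ := by
    rw [hQ]
    exact (ENNReal.rpow_lt_top_of_nonneg (by positivity) hKfin.ne).ne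
  -- choose ε
  have hβQ0 : β * Q ≠ 0 := by simp [hβ0, hQ0]
  have hβQt : β * Q ≠ ⊤ := ENNReal.mul_ne_top hβt hQt
  set r : ℝ≥0∞ := τ / (β * Q) with hr
  have hr0 : 0 < r := ENNReal.div_pos hτ0 hβQt
  obtain ⟨mε, hmε0, hmεr⟩ := exists_between hr0
  have hmεt : mε ≠ ⊤ := by
    intro h
    rw [h] at hmεr
    exact absurd (hmεr.trans_le le_top) (lt_irrefl _)
  set εr : ℝ := mε.toReal with hεr
  have hεr0 : 0 < εr := ENNReal.toReal_pos hmε0.ne' hmεt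
  have hofεr : ENNReal.ofReal εr ≤ r := by
    rw [hεr, ENNReal.ofReal_toReal hmεt]
    exact hmεr.le
  -- choose θ and δ
  set θ : ℝ≥0∞ := (τ / β) ^ p with hθ
  have hθ0 : θ ≠ 0 := by
    simp only [hθ, ne_eq, ENNReal.rpow_eq_zero_iff, not_or]
    constructor
    · rintro ⟨h1, -⟩
      exact absurd h1 (ENNReal.div_pos hτ0 hβt).ne'
    · rintro ⟨h1, -⟩
      rw [ENNReal.div_eq_top] at h1
      rcases h1 with ⟨-, h2⟩ | ⟨h2, -⟩
      · exact hβ0 h2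
      · exact hτt h2
  have hKint : ∫⁻ t, K.indicator (fun t => (ENNReal.ofReal (ω t)) ^ p) t ∂μ ≠ ⊤ := by
    rw [lintegral_indicator hKmeas]
    exact (hω.2.2 K hKc).ne
  obtain ⟨δ, hδ0, hδ⟩ := exists_pos_setLIntegral_lt_of_measure_lt hKint hθ0
  obtain ⟨mδ, hmδ0, hmδδ⟩ := exists_between hδ0
  have hmδt : mδ ≠ ⊤ := by
    intro h
    rw [h] at hmδδ
    exact absurd (hmδδ.trans_le le_top) (lt_irrefl _)
  set δr : ℝ := mδ.toReal with hδr
  have hδr0 : 0 < δr := ENNReal.toReal_pos hmδ0.ne' hmδt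
  -- apply the hypothesis
  obtain ⟨s, hsS, E, hEc, hEK, hEsmall, hEess⟩ := hcond K hKc hKpos εr δr hεr0 hδr0
  -- refine E to a measurable subset
  set B : Set G := toMeasurable μ (K \ E) with hB
  set E' : Set G := K ∩ Bᶜ with hE'
  have hE'meas : MeasurableSet E' := hKmeas.inter (measurableSet_toMeasurable μ _).compl
  have hE'K : E' ⊆ K := Set.inter_subset_left
  have hE'E : E' ⊆ E := by
    rintro t ⟨htK, htB⟩
    by_contra htE
    exact htB (subset_toMeasurable μ _ ⟨htK, htE⟩)
  have hKE' : μ (K \ E') < δ := by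
    have hsub : K \ E' ⊆ B := by
      rintro t ⟨htK, htE'⟩
      by_cases htB : t ∈ B
      · exact htB
      · exact absurd ⟨htK, htB⟩ htE'
    calc μ (K \ E') ≤ μ B := measure_mono hsub
      _ = μ (K \ E) := measure_toMeasurable _
      _ < ENNReal.ofReal δr := hEsmall
      _ ≤ δ := by rw [hδr, ENNReal.ofReal_toReal hmδt]; exact hmδδ.le
  have hessle : ∀ A : Set G, A ⊆ s • E ∪ s⁻¹ • E →
      essSup (fun t => ENNReal.ofReal (ω t)) (μ.restrict A) ≤ ENNReal.ofReal εr := by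
    intro A hA
    refine le_trans (essSup_mono_measure' (Measure.restrict_mono hA le_rfl)) hEess.le
  have hesss : essSup (fun t => ENNReal.ofReal (ω t)) (μ.restrict (s • E'))
      ≤ ENNReal.ofReal εr :=
    hessle _ (fun t ht => Or.inl (Set.smul_set_mono hE'E ht))
  have hesssi : essSup (fun t => ENNReal.ofReal (ω t)) (μ.restrict (s⁻¹ • E'))
      ≤ ENNReal.ofReal εr :=
    hessle _ (fun t ht => Or.inr (Set.smul_set_mono hE'E ht))
  -- simple bounds
  have hMx0 : 0 ≤ Mx := le_trans (norm_nonneg _) (hMx 1)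
  have hMb0 : 0 ≤ Mb := le_trans (norm_nonneg _) (hMb 1)
  have hθroot : θ ^ (1/p) = τ / β := by
    rw [hθ, ← ENNReal.rpow_mul, mul_one_div, div_self h0.ne', ENNReal.rpow_one]
  have hβθ : β * θ ^ (1/p) ≤ τ := by rw [hθroot]; exact ENNReal.mul_div_le
  have hεQ : β * ENNReal.ofReal εr * Q ≤ τ := by
    calc β * ENNReal.ofReal εr * Q ≤ β * (τ / (β * Q)) * Q := by gcongr
      _ = (β * Q) * (τ / (β * Q)) := by ring
      _ ≤ τ := ENNReal.mul_div_le
  -- core estimate for truncation errors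
  have hKE'meas : MeasurableSet (K \ E') := hKmeas.diff hE'meas
  have hKE'int : ∫⁻ t in K \ E', (ENNReal.ofReal (ω t)) ^ p ∂μ < θ := by
    have heq : ∫⁻ t in K \ E', (ENNReal.ofReal (ω t)) ^ p ∂μ
        = ∫⁻ t in K \ E', K.indicator (fun t => (ENNReal.ofReal (ω t)) ^ p) t ∂μ := by
      refine setLIntegral_congr_fun hKE'meas (fun t ht => ?_)
      rw [Set.indicator_of_mem ht.1]
    rw [heq]
    exact hδ _ hKE'
  have hcore : ∀ (f : G → ℂ) (M : ℝ), (∀ t, ‖f t‖ ≤ M) → ENNReal.ofReal M ≤ β →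
      (∀ t ∉ K \ E', f t = 0) → wNormP μ p ω f ≤ τ := by
    intro f M hM hMβ hsupp
    refine le_trans (wNormP_le_of_phi_le h0 (B := β * θ ^ (1/p)) ?_) hβθ
    have h1 : (β * θ ^ (1/p)) ^ p = β ^ p * θ := by
      rw [ENNReal.mul_rpow_of_nonneg _ _ h0.le, ← ENNReal.rpow_mul, one_div,
        inv_mul_cancel₀ h0.ne', ENNReal.rpow_one]
    rw [h1]
    calc Phi μ p ω f ≤ ENNReal.ofReal M ^ p * ∫⁻ t in K \ E', (ENNReal.ofReal (ω t)) ^ p ∂μ :=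
        phi_le_of_support h0 hKE'meas hM hsupp
      _ ≤ β ^ p * θ :=
          mul_le_mul' (ENNReal.rpow_le_rpow hMβ h0.le) hKE'int.le
  -- core estimate for translated pieces
  have hsm : ∀ (f : G → ℂ) (M : ℝ) (s' : G), (∀ t, ‖f t‖ ≤ M) → ENNReal.ofReal M ≤ β →
      (∀ t ∉ E', f t = 0) →
      essSup (fun t => ENNReal.ofReal (ω t)) (μ.restrict (s' • E')) ≤ ENNReal.ofReal εr →
      wNormP μ p ω (transl s' f) ≤ τ := by
    intro f M s' hM hMβ hsupp hess
    refine le_trans (wNormP_le_of_phi_le h0 (B := β * ENNReal.ofReal εr * Q) ?_) hεQ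
    have h1 : (β * ENNReal.ofReal εr * Q) ^ p = β ^ p * (ENNReal.ofReal εr ^ p * μ K) := by
      rw [ENNReal.mul_rpow_of_nonneg _ _ h0.le, ENNReal.mul_rpow_of_nonneg _ _ h0.le,
        hQ, ← ENNReal.rpow_mul, one_div, inv_mul_cancel₀ h0.ne', ENNReal.rpow_one, mul_assoc]
    rw [h1]
    calc Phi μ p ω (transl s' f)
        ≤ ENNReal.ofReal M ^ p * ∫⁻ z in s' • E', (ENNReal.ofReal (ω z)) ^ p ∂μ :=
          phi_transl_le h0 s' hE'meas hM hsupp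
      _ ≤ ENNReal.ofReal M ^ p * (ENNReal.ofReal εr ^ p * μ (s' • E')) := by
          gcongr
          exact setLintegral_w_le h0 hess
      _ ≤ β ^ p * (ENNReal.ofReal εr ^ p * μ K) :=
          mul_le_mul' (ENNReal.rpow_le_rpow hMβ h0.le) (mul_le_mul' le_rfl
            (by rw [measure_smul_set]; exact measure_mono hE'K))
  -- the four basic error terms
  have ha : wNormP μ p ω (fun t => E'.indicator x t - x t) ≤ τ := by
    refine hcore _ Mx (fun t => ?_) hMxβ (fun t ht => ?_)
    · by_cases ht : t ∈ E'
      · simp [Set.indicator_of_mem ht, hMx0]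
      · simp only [Set.indicator_of_notMem ht, zero_sub, norm_neg]
        exact hMx t
    · by_cases htE : t ∈ E'
      · simp [Set.indicator_of_mem htE]
      · have htK : t ∉ K := fun htK => ht ⟨htK, htE⟩
        simp [Set.indicator_of_notMem htE, hKx0 t (fun hKx => htK (Or.inl (Or.inr hKx)))]
  have hd : wNormP μ p ω (fun t => E'.indicator b t - b t) ≤ τ := by
    refine hcore _ Mb (fun t => ?_) hMbβ (fun t ht => ?_)
    · by_cases ht : t ∈ E'
      · simp [Set.indicator_of_mem ht, hMb0]
      · simp only [Set.indicator_of_notMem ht, zero_sub, norm_neg]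
        exact hMb t
    · by_cases htE : t ∈ E'
      · simp [Set.indicator_of_mem htE]
      · have htK : t ∉ K := fun htK => ht ⟨htK, htE⟩
        simp [Set.indicator_of_notMem htE, hKb0 t (fun hKb => htK (Or.inr hKb))]
  have hindb : ∀ t, ‖E'.indicator b t‖ ≤ Mb := by
    intro t
    by_cases ht : t ∈ E'
    · rw [Set.indicator_of_mem ht]; exact hMb t
    · rw [Set.indicator_of_notMem ht]; simpa using hMb0
  have hindx : ∀ t, ‖E'.indicator x t‖ ≤ Mx := by
    intro t
    by_cases ht : t ∈ E'
    · rw [Set.indicator_of_mem ht]; exact hMx t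
    · rw [Set.indicator_of_notMem ht]; simpa using hMx0
  have hb' : wNormP μ p ω (transl s⁻¹ (E'.indicator b)) ≤ τ :=
    hsm _ Mb s⁻¹ hindb hMbβ (fun t ht => Set.indicator_of_notMem ht _) hesssi
  have hc' : wNormP μ p ω (transl s (E'.indicator x)) ≤ τ :=
    hsm _ Mx s hindx hMxβ (fun t ht => Set.indicator_of_notMem ht _) hesss
  -- define x'
  set x' : G → ℂ := fun t => E'.indicator x t + transl s⁻¹ (E'.indicator b) t with hx'
  have htm : ∀ (s' : G) (f : G → ℂ), Measurable f → Measurable (transl s' f) :=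
    fun s' f hf => hf.comp (measurable_const_mul s'⁻¹)
  have hx'm : Measurable x' :=
    (hxm.indicator hE'meas).add (htm s⁻¹ _ (hbm.indicator hE'meas))
  -- x' is nice
  have hx'nice : Nice x' := by
    refine ⟨hx'm, ⟨Mx + Mb, fun t => ?_⟩, K ∪ s⁻¹ • K,
      hKc.union (hKc.smul s⁻¹), hKcl.union (hKcl.smul s⁻¹), fun t ht => ?_⟩
    · refine le_trans (norm_add_le _ _) ?_
      exact add_le_add (hindx t) (hindb _)
    · have ht1 : t ∉ E' := fun h => ht (Or.inl (hE'K h))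
      have ht2 : s * t ∉ E' := by
        intro h
        refine ht (Or.inr ⟨s * t, hE'K h, ?_⟩)
        simp
      show E'.indicator x t + E'.indicator b (s⁻¹⁻¹ * t) = 0
      rw [Set.indicator_of_notMem ht1, Set.indicator_of_notMem (by simpa using ht2)]
      simp
  -- the difference x' - x
  have hud : wNormP μ p ω (fun t => x' t - x t) ≤ τ + τ := by
    have hueq : (fun t => x' t - x t)
        = fun t => (E'.indicator x t - x t) + transl s⁻¹ (E'.indicator b) t := by
      funext t
      show E'.indicator x t + transl s⁻¹ (E'.indicator b) t - x t = _
      ring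
    rw [hueq]
    refine le_trans (wNormP_add_le hωm ?_ ?_ hp) (add_le_add ha hb')
    · exact (hxm.indicator hE'meas).sub hxm
    · exact htm s⁻¹ _ (hbm.indicator hE'meas)
  have h2τ : τ + τ = (2⁻¹ : ℝ≥0∞) ^ n * (c + 1)⁻¹ := by
    rw [hτ, ← two_mul, mul_left_comm]
    congr 1
    rw [ENNReal.mul_inv (Or.inl (by norm_num)) (Or.inl (by norm_num)), ← mul_assoc,
      ENNReal.mul_inv_cancel (by norm_num) (by norm_num), one_mul]
  have hc1 : (c + 1 : ℝ≥0∞)⁻¹ ≤ 1 := by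
    rw [ENNReal.inv_le_one]
    exact le_add_self
  have hWu : wNormP μ p ω (fun t => x' t - x t) ≤ (2⁻¹ : ℝ≥0∞) ^ n := by
    refine hud.trans ?_
    rw [h2τ]
    calc (2⁻¹:ℝ≥0∞) ^ n * (c+1)⁻¹ ≤ (2⁻¹ : ℝ≥0∞) ^ n * 1 := mul_le_mul' le_rfl hc1
      _ = (2⁻¹ : ℝ≥0∞) ^ n := mul_one _
  have hcWu : c * wNormP μ p ω (fun t => x' t - x t) ≤ (2⁻¹ : ℝ≥0∞) ^ n := by
    calc c * wNormP μ p ω (fun t => x' t - x t) ≤ c * ((2⁻¹:ℝ≥0∞) ^ n * (c+1)⁻¹) := by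
          rw [← h2τ]
          exact mul_le_mul' le_rfl hud
      _ = (2⁻¹:ℝ≥0∞) ^ n * (c * (c+1)⁻¹) := by ring
      _ ≤ (2⁻¹:ℝ≥0∞) ^ n * 1 := by
          refine mul_le_mul' le_rfl ?_
          calc c * (c+1)⁻¹ ≤ (c+1) * (c+1)⁻¹ := mul_le_mul' le_self_add le_rfl
            _ = 1 := ENNReal.mul_inv_cancel (by simp)
                (ENNReal.add_ne_top.2 ⟨hc.ne, by simp⟩)
      _ = (2⁻¹:ℝ≥0∞) ^ n := mul_one _
  -- stage error
  have hseq : (fun t => transl s x' t - g0 t) = fun t =>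
      transl s (E'.indicator x) t + ((E'.indicator b t - b t) + (b t - g0 t)) := by
    funext t
    show E'.indicator x (s⁻¹ * t) + E'.indicator b (s⁻¹⁻¹ * (s⁻¹ * t)) - g0 t = _
    rw [inv_inv, mul_inv_cancel_left]
    show _ = E'.indicator x (s⁻¹ * t) + ((E'.indicator b t - b t) + (b t - g0 t))
    ring
  have hWst : wNormP μ p ω (fun t => transl s x' t - g0 t) ≤ 3 * (2⁻¹ : ℝ≥0∞) ^ n := by
    rw [hseq]
    have hm1 : Measurable (transl s (E'.indicator x)) := htm s _ (hxm.indicator hE'meas)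
    have hm2 : Measurable fun t => (E'.indicator b t - b t) + (b t - g0 t) :=
      (((hbm.indicator hE'meas).sub hbm).add (hbm.sub hg0))
    refine le_trans (wNormP_add_le hωm hm1 hm2 hp) ?_
    have h3 : wNormP μ p ω (fun t => (E'.indicator b t - b t) + (b t - g0 t)) ≤
        τ + (2⁻¹ : ℝ≥0∞) ^ n := by
      refine le_trans (wNormP_add_le hωm ((hbm.indicator hE'meas).sub hbm) (hbm.sub hg0) hp) ?_
      refine add_le_add hd ?_
      have hrev := wNormP_congr_norm (μ := μ) (p := p) (ω := ω)
        (f := fun t => b t - g0 t) (g := fun t => g0 t - b t) (fun t => norm_sub_rev _ _)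
      rw [hrev]
      exact hbg0.le
    calc wNormP μ p ω (transl s (E'.indicator x))
          + wNormP μ p ω (fun t => (E'.indicator b t - b t) + (b t - g0 t))
        ≤ τ + (τ + (2⁻¹:ℝ≥0∞)^n) := add_le_add hc' h3
      _ ≤ (2⁻¹:ℝ≥0∞)^n + ((2⁻¹:ℝ≥0∞)^n + (2⁻¹:ℝ≥0∞)^n) :=
          add_le_add hτle (add_le_add hτle le_rfl)
      _ = 3 * (2⁻¹:ℝ≥0∞)^n := by ring
  exact ⟨x', s, hx'nice, hsS, hWu, hcWu, hWst⟩

end SDV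
namespace SDV
open Filter Topology Pointwise

theorem stmt5_aux {G : Type*} [Group G] [TopologicalSpace G] [IsTopologicalGroup G] [LocallyCompactSpace G]
    [SecondCountableTopology G] [MeasurableSpace G] [BorelSpace G]
    (hnc : ¬ CompactSpace G)
    (μ : Measure G) [μ.IsHaarMeasure]
    (p : ℝ) (hp : 1 ≤ p) (S : Set G) (ω : G → ℝ) (hω : IsWeight μ p ω)
    (hadm : ∀ s ∈ S, BoundedTransl μ p ω s)
    (hcond : ∀ K : Set G, IsCompact K → 0 < μ K → ∀ ε δ : ℝ, 0 < ε → 0 < δ →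
      ∃ s ∈ S, ∃ E : Set G, IsCompact E ∧ E ⊆ K ∧ μ (K \ E) < ENNReal.ofReal δ ∧
        essSup (fun t => ENNReal.ofReal (ω t)) (μ.restrict (s • E ∪ s⁻¹ • E))
          < ENNReal.ofReal ε) :
    ∃ x : G → ℂ, SDenseVec μ p ω S x := by
  classical
  have h0 : (0:ℝ) < p := lt_of_lt_of_le one_pos hp
  have hωm : Measurable ω := hω.1
  have hωpos : ∀ t, 0 < ω t := hω.2.1
  -- dense sequence
  obtain ⟨gs, hgsm, hgsfin, hgsdense⟩ := SDV.exists_dense_seq (μ := μ) hωm hp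
  -- constants for the translations
  set Cs : G → ℝ≥0∞ := fun s => if h : s ∈ S then (hadm s h).choose else 0 with hCs
  have hCs_lt : ∀ s ∈ S, Cs s < ⊤ := by
    intro s hs
    rw [hCs]
    simp only [dif_pos hs]
    exact (hadm s hs).choose_spec.1
  have hCs_bound : ∀ s ∈ S, ∀ f : G → ℂ, Measurable f →
      wNormP μ p ω (transl s f) ≤ Cs s * wNormP μ p ω f := by
    intro s hs f hf
    rw [hCs]
    simp only [dif_pos hs]
    exact (hadm s hs).choose_spec.2 f hf
  -- targets, each dense element appearing infinitely often
  set tgt : ℕ → G → ℂ := fun n => gs (Nat.unpair n).1 with htgt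
  have htgtm : ∀ n, Measurable (tgt n) := fun n => hgsm _
  have htgtfin : ∀ n, wNormP μ p ω (tgt n) < ⊤ := fun n => hgsfin _
  -- one step of the construction
  have hstep : ∀ (n : ℕ) (v : (G → ℂ) × ℝ≥0∞), ∃ w : (G → ℂ) × ℝ≥0∞ × G,
      SDV.Nice v.1 → v.2 < ⊤ →
      (SDV.Nice w.1 ∧ w.2.1 < ⊤ ∧ w.2.2 ∈ S ∧ w.2.1 = max v.2 (Cs w.2.2) ∧
        wNormP μ p ω (fun t => w.1 t - v.1 t) ≤ (2⁻¹:ℝ≥0∞) ^ n ∧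
        v.2 * wNormP μ p ω (fun t => w.1 t - v.1 t) ≤ (2⁻¹:ℝ≥0∞) ^ n ∧
        wNormP μ p ω (fun t => transl w.2.2 w.1 t - tgt n t) ≤ 3 * (2⁻¹:ℝ≥0∞) ^ n) := by
    intro n v
    by_cases h : SDV.Nice v.1 ∧ v.2 < ⊤
    · obtain ⟨x', s, h1, h2, h3, h4, h5⟩ := SDV.step_exists hp hω hcond (tgt n) (htgtm n)
        (htgtfin n) v.1 h.1 v.2 h.2 n
      exact ⟨(x', max v.2 (Cs s), s), fun _ _ =>
        ⟨h1, max_lt h.2 (hCs_lt s h2), h2, rfl, h3, h4, h5⟩⟩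
    · exact ⟨((fun _ => 0), 0, 1), fun h1 h2 => absurd ⟨h1, h2⟩ h⟩
  choose stepf hstepf using hstep
  obtain ⟨F, hF0, hFS⟩ : ∃ F : ℕ → (G → ℂ) × ℝ≥0∞ × G,
      F 0 = ((fun _ => 0), 0, 1) ∧ ∀ n, F (n+1) = stepf n ((F n).1, (F n).2.1) :=
    ⟨fun n => Nat.rec ((fun _ => 0), 0, 1) (fun n prev => stepf n (prev.1, prev.2.1)) n,
      rfl, fun n => rfl⟩
  set X : ℕ → G → ℂ := fun n => (F n).1 with hX
  set cc : ℕ → ℝ≥0∞ := fun n => (F n).2.1 with hcc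
  set ss : ℕ → G := fun n => (F (n+1)).2.2 with hss
  have hX0 : X 0 = fun _ => 0 := by show (F 0).1 = _; rw [hF0]
  have hcc0 : cc 0 = 0 := by show (F 0).2.1 = _; rw [hF0]
  have hinv : ∀ n, SDV.Nice (X n) ∧ cc n < ⊤ := by
    intro n
    induction n with
    | zero =>
        rw [hX0, hcc0]
        exact ⟨⟨measurable_const, ⟨0, fun t => by simp⟩, ∅, isCompact_empty,
          isClosed_empty, fun t _ => rfl⟩, by simp⟩
    | succ n ih =>
        have h := hstepf n ((F n).1, (F n).2.1) ih.1 ih.2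
        rw [← hFS n] at h
        exact ⟨h.1, h.2.1⟩
  have hspec : ∀ n, ss n ∈ S ∧ cc (n+1) = max (cc n) (Cs (ss n)) ∧
      wNormP μ p ω (fun t => X (n+1) t - X n t) ≤ (2⁻¹:ℝ≥0∞) ^ n ∧
      cc n * wNormP μ p ω (fun t => X (n+1) t - X n t) ≤ (2⁻¹:ℝ≥0∞) ^ n ∧
      wNormP μ p ω (fun t => transl (ss n) (X (n+1)) t - tgt n t) ≤ 3 * (2⁻¹:ℝ≥0∞) ^ n := by
    intro n
    have h := hstepf n ((F n).1, (F n).2.1) (hinv n).1 (hinv n).2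
    rw [← hFS n] at h
    exact ⟨h.2.2.1, h.2.2.2.1, h.2.2.2.2.1, h.2.2.2.2.2.1, h.2.2.2.2.2.2⟩
  -- monotonicity of the constants
  have hccmono : ∀ m n, m ≤ n → cc m ≤ cc n := by
    intro m n hmn
    induction n with
    | zero => rw [Nat.le_zero.1 hmn]
    | succ n ih =>
        rcases Nat.lt_or_ge m (n+1) with h | h
        · refine le_trans (ih (Nat.lt_succ_iff.1 h)) ?_
          rw [(hspec n).2.1]
          exact le_max_left _ _
        · rw [Nat.le_antisymm hmn h]
  have hCs_le : ∀ N n, N < n → Cs (ss N) ≤ cc n := by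
    intro N n hNn
    refine le_trans ?_ (hccmono (N+1) n hNn)
    rw [(hspec N).2.1]
    exact le_max_right _ _
  -- the increments
  set u : ℕ → G → ℂ := fun n t => X (n+1) t - X n t with hu
  have hum : ∀ n, Measurable (u n) := fun n => ((hinv (n+1)).1.1).sub ((hinv n).1.1)
  have hWu : ∀ n, wNormP μ p ω (u n) ≤ (2⁻¹:ℝ≥0∞) ^ n := fun n => (hspec n).2.2.1
  have hgeo : (∑' n : ℕ, ((2:ℝ≥0∞)⁻¹) ^ n) = 2 := by
    rw [ENNReal.tsum_geometric]
    rw [ENNReal.one_sub_inv_two]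
    simp
  have hsumu : ∑' n, wNormP μ p ω (u n) ≤ 2 := by
    rw [← hgeo]
    exact ENNReal.tsum_le_tsum hWu
  have hsumu_ne : ∑' n, wNormP μ p ω (u n) ≠ ⊤ :=
    (lt_of_le_of_lt hsumu (by simp)).ne
  -- partial sums are the X m
  have hps : ∀ m t, ∑ k ∈ Finset.range m, u k t = X m t := by
    intro m t
    rw [hu]
    rw [Finset.sum_range_sub (fun k => X k t)]
    rw [hX0]
    simp
  -- the limit function
  obtain ⟨x, hxm, hxtend⟩ := measurable_limit_of_tendsto_metrizable_ae
    (f := fun m t => ∑ k ∈ Finset.range m, u k t) (L := atTop)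
    (fun m => (Finset.measurable_sum _ fun k _ => hum k).aemeasurable)
    (SDV.ae_summable hωm hωpos hp u hum hsumu_ne)
  have hXtend : ∀ᵐ t ∂μ, Tendsto (fun m => X m t) atTop (𝓝 (x t)) := by
    filter_upwards [hxtend] with t ht
    have heq : (fun m => X m t) = fun m => ∑ k ∈ Finset.range m, u k t := by
      funext m; rw [hps]
    rw [heq]
    exact ht
  -- x has finite norm
  have hWx : wNormP μ p ω x ≤ 2 := by
    refine le_trans (SDV.wNormP_le_tsum_of_ae_tendsto hωm hp u hum x ?_) hsumu
    filter_upwards [hXtend] with t ht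
    have heq : (fun m => ∑ k ∈ Finset.range m, u k t) = fun m => X m t := by
      funext m; rw [hps]
    rw [heq]
    exact ht
  -- tail estimates
  have htail : ∀ N, wNormP μ p ω (fun t => x t - X (N+1) t) ≤ (2⁻¹:ℝ≥0∞) ^ N ∧
      Cs (ss N) * wNormP μ p ω (fun t => x t - X (N+1) t) ≤ (2⁻¹:ℝ≥0∞) ^ N := by
    intro N
    have htendtail : ∀ᵐ t ∂μ, Tendsto (fun m => ∑ k ∈ Finset.range m, u (N+1+k) t) atTop
        (𝓝 (x t - X (N+1) t)) := by
      filter_upwards [hXtend] with t ht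
      have heq : ∀ m, ∑ k ∈ Finset.range m, u (N+1+k) t = X (N+1+m) t - X (N+1) t := by
        intro m
        rw [show (fun k => u (N+1+k) t) = fun k => (fun j => X (N+1+j) t) (k+1) -
          (fun j => X (N+1+j) t) k from rfl]
        rw [Finset.sum_range_sub (fun j => X (N+1+j) t)]
      simp only [heq]
      have h1 : Tendsto (fun m => X (N+1+m) t) atTop (𝓝 (x t)) := by
        refine ht.comp ?_
        exact tendsto_atTop_mono (fun m => Nat.le_add_left m (N+1)) tendsto_id
      exact h1.sub_const _
    have hWtail := SDV.wNormP_le_tsum_of_ae_tendsto hωm hp (fun k => u (N+1+k))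
      (fun k => hum _) _ htendtail
    have hgeoN : (∑' k : ℕ, ((2:ℝ≥0∞)⁻¹) ^ (N+1+k)) = (2⁻¹:ℝ≥0∞) ^ N := by
      have h1 : ∀ k : ℕ, ((2:ℝ≥0∞)⁻¹) ^ (N+1+k) = ((2:ℝ≥0∞)⁻¹) ^ (N+1) * (2⁻¹) ^ k :=
        fun k => pow_add _ _ _
      simp only [h1]
      rw [ENNReal.tsum_mul_left, hgeo, pow_succ, mul_assoc,
        ENNReal.inv_mul_cancel (by norm_num) (by norm_num), mul_one]
    constructor
    · refine hWtail.trans ?_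
      rw [← hgeoN]
      exact ENNReal.tsum_le_tsum fun k => hWu _
    · calc Cs (ss N) * wNormP μ p ω (fun t => x t - X (N+1) t)
          ≤ Cs (ss N) * ∑' k, wNormP μ p ω (u (N+1+k)) := mul_le_mul' le_rfl hWtail
        _ = ∑' k, Cs (ss N) * wNormP μ p ω (u (N+1+k)) := ENNReal.tsum_mul_left.symm
        _ ≤ ∑' k : ℕ, ((2:ℝ≥0∞)⁻¹) ^ (N+1+k) := by
            refine ENNReal.tsum_le_tsum fun k => ?_
            refine le_trans (mul_le_mul' (hCs_le N (N+1+k) (by omega)) le_rfl)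
              (hspec (N+1+k)).2.2.2.1
        _ = (2⁻¹:ℝ≥0∞) ^ N := hgeoN
  -- conclusion
  refine ⟨x, hxm, lt_of_le_of_lt hWx (by simp), ?_⟩
  intro g hg hgfin ε hε
  obtain ⟨i, hi⟩ := hgsdense g hg hgfin (ε/2) (half_pos hε)
  -- choose a large stage targeting gs i
  have htends0 : Tendsto (fun m : ℕ => (2⁻¹:ℝ≥0∞) ^ m) atTop (𝓝 0) :=
    ENNReal.tendsto_pow_atTop_nhds_zero_of_lt_one (by simp [ENNReal.inv_lt_one])
  have hq4 : (0:ℝ≥0∞) < ENNReal.ofReal (ε/2) / 4 :=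
    ENNReal.div_pos (by simp [ENNReal.ofReal_eq_zero]; positivity) (by norm_num)
  obtain ⟨m, hm⟩ := (htends0.eventually_lt_const hq4).exists
  set N := Nat.pair i m with hN
  have hNi : (Nat.unpair N).1 = i := by rw [hN, Nat.unpair_pair]
  have hmN : m ≤ N := Nat.right_le_pair i m
  have hpowN : (2⁻¹:ℝ≥0∞) ^ N ≤ (2⁻¹:ℝ≥0∞) ^ m :=
    pow_le_pow_of_le_one (by simp) (by simp [ENNReal.inv_le_one]) hmN
  refine ⟨ss N, (hspec N).1, ?_⟩
  -- decompose the error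
  have hdec : (fun t => transl (ss N) x t - g t) = fun t =>
      (transl (ss N) (fun t => x t - X (N+1) t) t
        + (transl (ss N) (X (N+1)) t - tgt N t)) + (tgt N t - g t) := by
    funext t
    show x ((ss N)⁻¹ * t) - g t = _
    show _ = (x ((ss N)⁻¹ * t) - X (N+1) ((ss N)⁻¹ * t)
      + (X (N+1) ((ss N)⁻¹ * t) - tgt N t)) + (tgt N t - g t)
    ring
  have hm1 : Measurable (fun t => transl (ss N) (fun t => x t - X (N+1) t) t
      + (transl (ss N) (X (N+1)) t - tgt N t)) := by
    have ht1 : Measurable (transl (ss N) (fun t => x t - X (N+1) t)) :=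
      (hxm.sub (hinv (N+1)).1.1).comp (measurable_const_mul _)
    have ht2 : Measurable (transl (ss N) (X (N+1))) :=
      ((hinv (N+1)).1.1).comp (measurable_const_mul _)
    exact ht1.add (ht2.sub (htgtm N))
  have hm2 : Measurable fun t => tgt N t - g t := (htgtm N).sub hg
  rw [hdec]
  have hmain : wNormP μ p ω (fun t =>
      transl (ss N) (fun t => x t - X (N+1) t) t + (transl (ss N) (X (N+1)) t - tgt N t))
      ≤ 4 * (2⁻¹:ℝ≥0∞) ^ N := by
    have ht1 : Measurable (transl (ss N) (fun t => x t - X (N+1) t)) :=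
      (hxm.sub (hinv (N+1)).1.1).comp (measurable_const_mul _)
    have ht2 : Measurable fun t => transl (ss N) (X (N+1)) t - tgt N t :=
      (((hinv (N+1)).1.1).comp (measurable_const_mul _)).sub (htgtm N)
    refine le_trans (SDV.wNormP_add_le hωm ht1 ht2 hp) ?_
    have h1 : wNormP μ p ω (transl (ss N) (fun t => x t - X (N+1) t)) ≤ (2⁻¹:ℝ≥0∞) ^ N := by
      refine le_trans (hCs_bound (ss N) (hspec N).1 _ (hxm.sub (hinv (N+1)).1.1)) ?_
      exact (htail N).2
    calc wNormP μ p ω (transl (ss N) (fun t => x t - X (N+1) t))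
          + wNormP μ p ω (fun t => transl (ss N) (X (N+1)) t - tgt N t)
        ≤ (2⁻¹:ℝ≥0∞) ^ N + 3 * (2⁻¹:ℝ≥0∞) ^ N := add_le_add h1 (hspec N).2.2.2.2
      _ = 4 * (2⁻¹:ℝ≥0∞) ^ N := by ring
  have hmain2 : wNormP μ p ω (fun t => tgt N t - g t) < ENNReal.ofReal (ε/2) := by
    have htgtN : tgt N = gs i := by
      show gs (Nat.unpair N).1 = gs i
      rw [hNi]
    have hrev := SDV.wNormP_congr_norm (μ := μ) (p := p) (ω := ω)
      (f := fun t => tgt N t - g t) (g := fun t => g t - gs i t) (fun t => by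
        rw [htgtN]; exact norm_sub_rev _ _)
    rw [hrev]
    exact hi
  refine lt_of_le_of_lt (SDV.wNormP_add_le hωm hm1 hm2 hp) ?_
  have h4N : 4 * (2⁻¹:ℝ≥0∞) ^ N ≤ ENNReal.ofReal (ε/2) := by
    calc 4 * (2⁻¹:ℝ≥0∞) ^ N ≤ 4 * (ENNReal.ofReal (ε/2) / 4) := by
          refine mul_le_mul' le_rfl ?_
          exact le_trans hpowN hm.le
      _ ≤ ENNReal.ofReal (ε/2) := ENNReal.mul_div_le
  have hfin : wNormP μ p ω (fun t =>
      transl (ss N) (fun t => x t - X (N+1) t) t + (transl (ss N) (X (N+1)) t - tgt N t))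
      ≠ ⊤ := (lt_of_le_of_lt (hmain.trans h4N) ENNReal.ofReal_lt_top).ne
  have hlt := ENNReal.add_lt_add_of_le_of_lt hfin (hmain.trans h4N) hmain2
  rwa [← ENNReal.ofReal_add (by positivity) (by positivity), add_halves] at hlt


end SDV

theorem stmt5 [Group G] [TopologicalSpace G] [IsTopologicalGroup G] [LocallyCompactSpace G]
    [SecondCountableTopology G] [MeasurableSpace G] [BorelSpace G]
    (hnc : ¬ CompactSpace G)
    (μ : Measure G) [μ.IsHaarMeasure]
    (p : ℝ) (hp : 1 ≤ p) (S : Set G) (ω : G → ℝ) (hω : IsWeight μ p ω)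
    (hadm : ∀ s ∈ S, BoundedTransl μ p ω s)
    (hcond : ∀ K : Set G, IsCompact K → 0 < μ K → ∀ ε δ : ℝ, 0 < ε → 0 < δ →
      ∃ s ∈ S, ∃ E : Set G, IsCompact E ∧ E ⊆ K ∧ μ (K \ E) < ENNReal.ofReal δ ∧
        essSup (fun t => ENNReal.ofReal (ω t)) (μ.restrict (s • E ∪ s⁻¹ • E))
          < ENNReal.ofReal ε) :
    ∃ x : G → ℂ, SDenseVec μ p ω S x :=
  SDV.stmt5_aux hnc μ p hp S ω hω hadm hcond
end
end

section
/- Let G be a non-compact second countable locally compact group and let S ⊂ G generate an abelian subgroup of G; let ω be an S-admissible weight. If there exists an S-dense vector in L^p(G,ω) for some p ∈ [1,∞), then for every compact F ⊂ G and every δ > 0 there exist s ∈ S and a compact E ⊂ F with μ(F \ E) < δ and ess sup_{sE ∪ s⁻¹E} ω < δ. -/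
open MeasureTheory ENNReal Pointwise

noncomputable section

variable {G : Type*}
/-! ### Auxiliary lemmas -/

/-- Indicator function with a constant complex value. -/
def chiC {G : Type*} (A : Set G) (c : ℂ) : G → ℂ := A.indicator fun _ => c

lemma chiC_meas {G : Type*} [MeasurableSpace G] {A : Set G} (hA : MeasurableSet A) (c : ℂ) :
    Measurable (chiC A c) := measurable_const.indicator hA

lemma norm_ge_of_close (a b : ℂ) {u : ℂ} {r : ℝ} (h : ‖u - a‖ ≤ r) :
    ‖a - b‖ - r ≤ ‖u - b‖ := by
  have h1 : dist a b ≤ dist a u + dist u b := dist_triangle a u b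
  simp only [dist_eq_norm] at h1
  have h2 : ‖a - u‖ = ‖u - a‖ := norm_sub_rev a u
  linarith

/-- From a bound on the weighted norm, a bound on the underlying integral. -/
lemma wnorm_pow {G : Type*} [MeasurableSpace G] {μ : Measure G} {p : ℝ} (hp : 0 < p)
    {ω : G → ℝ} {f : G → ℂ} {e : ℝ≥0∞} (h : wNormP μ p ω f ≤ e) :
    ∫⁻ t, (‖f t‖₊ * ENNReal.ofReal (ω t)) ^ p ∂μ ≤ e ^ p := by
  have h2 := ENNReal.rpow_le_rpow h hp.le
  rwa [wNormP, ← ENNReal.rpow_mul, one_div, inv_mul_cancel₀ hp.ne', ENNReal.rpow_one] at h2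

/-- Markov-type inequality: a set on which `‖f‖` and `ω` are bounded below has small
measure, provided the weighted norm of `f` is small. -/
lemma mu_bound {G : Type*} [MeasurableSpace G] {μ : Measure G} {p : ℝ} (hp : 1 ≤ p)
    {ω : G → ℝ} {f : G → ℂ} {A : Set G} (hA : MeasurableSet A)
    {c d ε β : ℝ} (hc : 0 < c) (hd : 0 < d)
    (hlowf : ∀ t ∈ A, c ≤ ‖f t‖) (hlowω : ∀ t ∈ A, d ≤ ω t)
    (hint : ∫⁻ t, (‖f t‖₊ * ENNReal.ofReal (ω t)) ^ p ∂μ ≤ ENNReal.ofReal ε ^ p)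
    (h1 : ε / (c * d) ≤ 1) (h2 : ε / (c * d) ≤ β) :
    μ A ≤ ENNReal.ofReal β := by
  have hp0 : 0 < p := lt_of_lt_of_le one_pos hp
  have hcd : 0 < c * d := mul_pos hc hd
  have key : ENNReal.ofReal (c * d) ^ p * μ A ≤ ENNReal.ofReal ε ^ p := by
    calc ENNReal.ofReal (c * d) ^ p * μ A
        = ∫⁻ _ in A, ENNReal.ofReal (c * d) ^ p ∂μ := (setLIntegral_const _ _).symm
      _ ≤ ∫⁻ t in A, (‖f t‖₊ * ENNReal.ofReal (ω t)) ^ p ∂μ := by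
          refine setLIntegral_mono' hA fun t ht => ?_
          refine ENNReal.rpow_le_rpow ?_ hp0.le
          rw [ENNReal.ofReal_mul hc.le]
          refine mul_le_mul' ?_ (ENNReal.ofReal_le_ofReal (hlowω t ht))
          rw [← ENNReal.ofReal_coe_nnreal, coe_nnnorm]
          exact ENNReal.ofReal_le_ofReal (hlowf t ht)
      _ ≤ ∫⁻ t, (‖f t‖₊ * ENNReal.ofReal (ω t)) ^ p ∂μ := setLIntegral_le_lintegral _ _
      _ ≤ ENNReal.ofReal ε ^ p := hint
  have hne0 : ENNReal.ofReal (c * d) ^ p ≠ 0 :=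
    (ENNReal.rpow_pos (ENNReal.ofReal_pos.2 hcd) ENNReal.ofReal_ne_top).ne'
  have hnet : ENNReal.ofReal (c * d) ^ p ≠ ⊤ :=
    (ENNReal.rpow_lt_top_of_nonneg hp0.le ENNReal.ofReal_ne_top).ne
  have hdiv : μ A ≤ ENNReal.ofReal ε ^ p / ENNReal.ofReal (c * d) ^ p :=
    (ENNReal.le_div_iff_mul_le (Or.inl hne0) (Or.inl hnet)).2 (by rwa [mul_comm])
  calc μ A ≤ ENNReal.ofReal ε ^ p / ENNReal.ofReal (c * d) ^ p := hdiv
    _ = (ENNReal.ofReal ε / ENNReal.ofReal (c * d)) ^ p :=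
        (ENNReal.div_rpow_of_nonneg _ _ hp0.le).symm
    _ = ENNReal.ofReal (ε / (c * d)) ^ p := by rw [ENNReal.ofReal_div_of_pos hcd]
    _ ≤ ENNReal.ofReal (ε / (c * d)) ^ (1 : ℝ) :=
        ENNReal.rpow_le_rpow_of_exponent_ge (ENNReal.ofReal_le_one.2 h1) hp
    _ = ENNReal.ofReal (ε / (c * d)) := ENNReal.rpow_one _
    _ ≤ ENNReal.ofReal β := ENNReal.ofReal_le_ofReal h2

/-- The weighted norm of a constant indicator supported in a compact set is finite. -/
lemma wnorm_chi_lt_top {G : Type*} [MeasurableSpace G] [TopologicalSpace G] {μ : Measure G}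
    {p : ℝ} (hp : 0 < p) {ω : G → ℝ} (hω : IsWeight μ p ω) {A K : Set G}
    (hA : MeasurableSet A) (hK : IsCompact K) (hsub : A ⊆ K) (c : ℂ) :
    wNormP μ p ω (chiC A c) < ⊤ := by
  have hint : ∫⁻ t, (‖chiC A c t‖₊ * ENNReal.ofReal (ω t)) ^ p ∂μ
      = ∫⁻ t in A, ((‖c‖₊ : ℝ≥0∞) * ENNReal.ofReal (ω t)) ^ p ∂μ := by
    rw [← lintegral_indicator hA]
    congr 1
    funext t
    by_cases ht : t ∈ A
    · simp [chiC, Set.indicator_of_mem ht]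
    · simp [chiC, Set.indicator_of_notMem ht, ENNReal.zero_rpow_of_pos hp]
  have hbound : ∫⁻ t, (‖chiC A c t‖₊ * ENNReal.ofReal (ω t)) ^ p ∂μ
      ≤ (‖c‖₊ : ℝ≥0∞) ^ p * ∫⁻ t in K, ENNReal.ofReal (ω t) ^ p ∂μ := by
    rw [hint]
    calc ∫⁻ t in A, ((‖c‖₊ : ℝ≥0∞) * ENNReal.ofReal (ω t)) ^ p ∂μ
        ≤ ∫⁻ t in K, ((‖c‖₊ : ℝ≥0∞) * ENNReal.ofReal (ω t)) ^ p ∂μ :=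
          lintegral_mono_set hsub
      _ = ∫⁻ t in K, (‖c‖₊ : ℝ≥0∞) ^ p * ENNReal.ofReal (ω t) ^ p ∂μ := by
          simp_rw [ENNReal.mul_rpow_of_nonneg _ _ hp.le]
      _ = (‖c‖₊ : ℝ≥0∞) ^ p * ∫⁻ t in K, ENNReal.ofReal (ω t) ^ p ∂μ :=
          lintegral_const_mul' _ _ (ENNReal.rpow_lt_top_of_nonneg hp.le ENNReal.coe_ne_top).ne
  have hfin : ∫⁻ t, (‖chiC A c t‖₊ * ENNReal.ofReal (ω t)) ^ p ∂μ < ⊤ :=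
    lt_of_le_of_lt hbound (ENNReal.mul_lt_top
      (ENNReal.rpow_lt_top_of_nonneg hp.le ENNReal.coe_ne_top) (hω.2.2 K hK))
  exact ENNReal.rpow_lt_top_of_nonneg (by positivity) hfin.ne
set_option maxHeartbeats 1000000 in
theorem stmt7 [Group G] [TopologicalSpace G] [IsTopologicalGroup G] [LocallyCompactSpace G]
    [SecondCountableTopology G] [MeasurableSpace G] [BorelSpace G]
    (hnc : ¬ CompactSpace G)
    (μ : Measure G) [μ.IsHaarMeasure]
    (p : ℝ) (hp : 1 ≤ p) (S : Set G)
    (hcomm : ∀ a ∈ S, ∀ b ∈ S, a * b = b * a)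
    (ω : G → ℝ) (hω : IsWeight μ p ω)
    (hadm : ∀ s ∈ S, BoundedTransl μ p ω s)
    (x : G → ℂ) (hx : SDenseVec μ p ω S x) :
    ∀ F : Set G, IsCompact F → ∀ δ : ℝ, 0 < δ →
      ∃ s ∈ S, ∃ E : Set G, IsCompact E ∧ E ⊆ F ∧ μ (F \ E) < ENNReal.ofReal δ ∧
        essSup (fun t => ENNReal.ofReal (ω t)) (μ.restrict (s • E ∪ s⁻¹ • E))
          < ENNReal.ofReal δ := by
  intro F hF δ hδ
  obtain ⟨hωm, hωpos, hωloc⟩ := hω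
  obtain ⟨hxm, hxnorm, hxdense⟩ := hx
  have hp0 : 0 < p := lt_of_lt_of_le one_pos hp
  -- the compact measurable hull of `F`
  have hF' : IsCompact (closure F) := hF.closure
  have hF'm : MeasurableSet (closure F) := isClosed_closure.measurableSet
  have hFF' : F ⊆ closure F := subset_closure
  set F' : Set G := closure F with hF'def
  -- choose `η` so that `ω ≥ η` outside a small part of `F'`
  have hημ : ∃ η : ℝ, 0 < η ∧ μ {t ∈ F' | ω t < η} < ENNReal.ofReal (δ/8) := by
    set D : ℕ → Set G := fun n => {t ∈ F' | ω t < 1/(n+1)} with hD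
    have hDm : ∀ n, MeasurableSet (D n) := fun n =>
      hF'm.inter (measurableSet_lt hωm measurable_const)
    have hanti : Antitone D := by
      intro n m hnm t ht
      refine ⟨ht.1, lt_of_lt_of_le ht.2 ?_⟩
      apply one_div_le_one_div_of_le
      · positivity
      · have : (n : ℝ) ≤ m := by exact_mod_cast hnm
        linarith
    have hempty : ⋂ n, D n = ∅ := by
      rw [Set.eq_empty_iff_forall_notMem]
      intro t ht
      simp only [Set.mem_iInter] at ht
      obtain ⟨n, hn⟩ := exists_nat_one_div_lt (hωpos t)
      exact absurd (ht n).2 (not_lt.2 hn.le)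
    have hfin : μ (D 0) ≠ ⊤ :=
      (lt_of_le_of_lt (measure_mono fun t ht => ht.1) hF'.measure_lt_top).ne
    have htend := tendsto_measure_iInter_atTop (μ := μ)
      (fun n => (hDm n).nullMeasurableSet) hanti ⟨0, hfin⟩
    rw [hempty, measure_empty] at htend
    have hpos : (0:ℝ≥0∞) < ENNReal.ofReal (δ/8) := ENNReal.ofReal_pos.2 (by linarith)
    obtain ⟨n, hn⟩ := ((tendsto_order.1 htend).2 _ hpos).exists
    exact ⟨1/(n+1), by positivity, hn⟩
  obtain ⟨η, hη, hDη⟩ := hημ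
  set B : Set G := {t ∈ F' | η ≤ ω t} with hBdef
  have hB : MeasurableSet B := hF'm.inter (measurableSet_le measurable_const hωm)
  have hBF' : B ⊆ F' := fun t ht => ht.1
  have hFB : μ (F' \ B) < ENNReal.ofReal (δ/8) := by
    have heq : F' \ B = {t ∈ F' | ω t < η} := by
      ext t
      constructor
      · rintro ⟨h1, h2⟩
        exact ⟨h1, by by_contra hc; exact h2 ⟨h1, not_lt.1 hc⟩⟩
      · rintro ⟨h1, h2⟩
        exact ⟨h1, fun hb => absurd hb.2 (not_le.2 h2)⟩
    rwa [heq]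
  -- choice of constants
  set m : ℝ := min 1 (δ/48) with hmdef
  have hm : 0 < m := lt_min one_pos (by linarith)
  have hm1 : m ≤ 1 := min_le_left _ _
  have hmδ : m ≤ δ/48 := min_le_right _ _
  have hminηδ : 0 < min η δ := lt_min hη hδ
  set ε : ℝ := min η δ * m / 4 with hεdef
  have hε : 0 < ε := by
    have := mul_pos hminηδ hm; rw [hεdef]; linarith
  have key1 : ε / (1/4 * η) ≤ m := by
    rw [div_le_iff₀ (by linarith : (0:ℝ) < 1/4 * η)]
    have h1 := min_le_left η δ
    nlinarith [hm.le]
  have key2 : ε / (1/2 * (δ/2)) ≤ m := by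
    rw [div_le_iff₀ (by nlinarith : (0:ℝ) < 1/2 * (δ/2))]
    have h1 := min_le_right η δ
    nlinarith [hm.le]
  -- first approximation: `T_{s₁} x ≈ χ_B`
  have hIW : IsWeight μ p ω := ⟨hωm, hωpos, hωloc⟩
  have hχB : wNormP μ p ω (chiC B (1:ℂ)) < ⊤ := wnorm_chi_lt_top hp0 hIW hB hF' hBF' 1
  obtain ⟨s₁, hs₁S, hN₁⟩ := hxdense (chiC B 1) (chiC_meas hB 1) hχB ε hε
  set y : G → ℂ := transl s₁ x with hydef
  have hym : Measurable y := hxm.comp (measurable_const_mul s₁⁻¹)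
  obtain ⟨C₁, hC₁top, hC₁⟩ := hadm s₁ hs₁S
  have hC₁0 : (0:ℝ) ≤ C₁.toReal := ENNReal.toReal_nonneg
  set ε₂ : ℝ := ε / (C₁.toReal + 1) with hε₂def
  have hε₂ : 0 < ε₂ := div_pos hε (by linarith)
  -- second approximation
  set g₂ : G → ℂ := chiC (s₁⁻¹ • B) 2 with hg₂def
  have hg₂m : Measurable g₂ := chiC_meas (hB.const_smul s₁⁻¹) 2
  have hg₂norm : wNormP μ p ω g₂ < ⊤ :=
    wnorm_chi_lt_top hp0 hIW (hB.const_smul s₁⁻¹) (hF'.smul s₁⁻¹) (Set.smul_set_mono hBF') 2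
  obtain ⟨s₂, hs₂S, hN₂'⟩ := hxdense g₂ hg₂m hg₂norm ε₂ hε₂
  -- the two controlled functions
  set f₁ : G → ℂ := fun t => y t - chiC B 1 t with hf₁def
  set f₂ : G → ℂ := fun t => y (s₂⁻¹ * t) - chiC B 2 t with hf₂def
  have hf₁m : Measurable f₁ := hym.sub (chiC_meas hB 1)
  have hf₂m : Measurable f₂ := (hym.comp (measurable_const_mul s₂⁻¹)).sub (chiC_meas hB 2)
  have hsmul_mem : ∀ (a t : G) (A : Set G), t ∈ a • A ↔ a⁻¹ * t ∈ A := by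
    intro a t A; rw [← smul_eq_mul]; exact Set.mem_smul_set_iff_inv_smul_mem
  -- `T_{s₂} y ≈ 2 χ_B` via commutativity and boundedness of `T_{s₁}`
  have hkey : transl s₁ (fun t => transl s₂ x t - g₂ t) = f₂ := by
    funext t
    show x (s₂⁻¹ * (s₁⁻¹ * t)) - g₂ (s₁⁻¹ * t) = y (s₂⁻¹ * t) - chiC B 2 t
    have harg : s₂⁻¹ * (s₁⁻¹ * t) = s₁⁻¹ * (s₂⁻¹ * t) := by
      rw [← mul_assoc, ← mul_assoc, ← mul_inv_rev, ← mul_inv_rev, hcomm s₁ hs₁S s₂ hs₂S]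
    have hmem : s₁⁻¹ * t ∈ s₁⁻¹ • B ↔ t ∈ B := by
      rw [← smul_eq_mul]; exact Set.smul_mem_smul_set_iff
    have hind : g₂ (s₁⁻¹ * t) = chiC B 2 t := by
      simp only [hg₂def, chiC]
      by_cases ht : t ∈ B
      · rw [Set.indicator_of_mem ht, Set.indicator_of_mem (hmem.2 ht)]
      · rw [Set.indicator_of_notMem ht, Set.indicator_of_notMem (fun hc => ht (hmem.1 hc))]
    rw [harg, hind]
    rfl
  have hN₂ : wNormP μ p ω f₂ ≤ ENNReal.ofReal ε := by
    have hb := hC₁ (fun t => transl s₂ x t - g₂ t)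
      ((hxm.comp (measurable_const_mul s₂⁻¹)).sub hg₂m)
    rw [hkey] at hb
    refine hb.trans ?_
    have hC1le : C₁ ≤ ENNReal.ofReal (C₁.toReal + 1) := by
      conv_lhs => rw [← ENNReal.ofReal_toReal hC₁top.ne]
      exact ENNReal.ofReal_le_ofReal (by linarith)
    calc C₁ * wNormP μ p ω (fun t => transl s₂ x t - g₂ t)
        ≤ ENNReal.ofReal (C₁.toReal + 1) * ENNReal.ofReal ε₂ := mul_le_mul' hC1le hN₂'.le
      _ = ENNReal.ofReal ((C₁.toReal + 1) * ε₂) := (ENNReal.ofReal_mul (by linarith)).symm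
      _ = ENNReal.ofReal ε := by
          rw [hε₂def]
          congr 1
          field_simp
  have T₁ : ∫⁻ t, (‖f₁ t‖₊ * ENNReal.ofReal (ω t)) ^ p ∂μ ≤ ENNReal.ofReal ε ^ p :=
    wnorm_pow hp0 hN₁.le
  have T₂ : ∫⁻ t, (‖f₂ t‖₊ * ENNReal.ofReal (ω t)) ^ p ∂μ ≤ ENNReal.ofReal ε ^ p :=
    wnorm_pow hp0 hN₂
  -- the exceptional sets
  set A₁ : Set G := {t ∈ B | 1/4 ≤ ‖y t - 1‖} with hA₁def
  set A₂ : Set G := {t ∈ B | 1/2 ≤ ‖y (s₂⁻¹ * t) - 2‖} with hA₂def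
  have hA₁m : MeasurableSet A₁ :=
    hB.inter (measurableSet_le measurable_const (hym.sub measurable_const).norm)
  have hA₂m : MeasurableSet A₂ :=
    hB.inter (measurableSet_le measurable_const
      (((hym.comp (measurable_const_mul s₂⁻¹)).sub measurable_const).norm))
  set E₀ : Set G := B \ (A₁ ∪ A₂) with hE₀def
  set E₁ : Set G := E₀ \ (s₂⁻¹ • B) with hE₁def
  set E₂ : Set G := E₁ \ (s₂ • B) with hE₂def
  set bad₅ : Set G := {t ∈ E₂ | δ/2 ≤ ω (s₂ * t)} with hbad₅def
  set bad₆ : Set G := {t ∈ E₂ | δ/2 ≤ ω (s₂⁻¹ * t)} with hbad₆def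
  set E₃ : Set G := E₂ \ (bad₅ ∪ bad₆) with hE₃def
  have hE₀m : MeasurableSet E₀ := hB.diff (hA₁m.union hA₂m)
  have hE₁m : MeasurableSet E₁ := hE₀m.diff (hB.const_smul s₂⁻¹)
  have hE₂m : MeasurableSet E₂ := hE₁m.diff (hB.const_smul s₂)
  have hbad₅m : MeasurableSet bad₅ :=
    hE₂m.inter (measurableSet_le measurable_const (hωm.comp (measurable_const_mul s₂)))
  have hbad₆m : MeasurableSet bad₆ :=
    hE₂m.inter (measurableSet_le measurable_const (hωm.comp (measurable_const_mul s₂⁻¹)))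
  have hE₃m : MeasurableSet E₃ := hE₂m.diff (hbad₅m.union hbad₆m)
  have hE₀B : E₀ ⊆ B := Set.diff_subset
  have hE₁E₀ : E₁ ⊆ E₀ := Set.diff_subset
  have hE₂E₁ : E₂ ⊆ E₁ := Set.diff_subset
  have hE₂E₀ : E₂ ⊆ E₀ := hE₂E₁.trans hE₁E₀
  have hE₀y : ∀ t ∈ E₀, ‖y t - 1‖ ≤ 1/4 ∧ ‖y (s₂⁻¹ * t) - 2‖ ≤ 1/2 := by
    intro t ht
    constructor
    · by_contra hcon; push_neg at hcon
      exact ht.2 (Or.inl ⟨ht.1, hcon.le⟩)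
    · by_contra hcon; push_neg at hcon
      exact ht.2 (Or.inr ⟨ht.1, hcon.le⟩)
  -- six measure bounds
  have hμA₁ : μ A₁ ≤ ENNReal.ofReal (δ/48) := by
    refine mu_bound hp hA₁m (by norm_num : (0:ℝ) < 1/4) hη ?_ ?_ T₁
      (key1.trans hm1) (key1.trans hmδ)
    · intro t ht
      have hc : chiC B 1 t = 1 := Set.indicator_of_mem ht.1 _
      show (1:ℝ)/4 ≤ ‖f₁ t‖
      simp only [hf₁def, hc]
      exact ht.2
    · intro t ht; exact ht.1.2
  have hμA₂ : μ A₂ ≤ ENNReal.ofReal (δ/48) := by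
    refine mu_bound hp hA₂m (by norm_num : (0:ℝ) < 1/4) hη ?_ ?_ T₂
      (key1.trans hm1) (key1.trans hmδ)
    · intro t ht
      have hc : chiC B 2 t = 2 := Set.indicator_of_mem ht.1 _
      show (1:ℝ)/4 ≤ ‖f₂ t‖
      simp only [hf₂def, hc]
      linarith [ht.2]
    · intro t ht; exact ht.1.2
  have hμ₃ : μ (E₀ ∩ s₂⁻¹ • B) ≤ ENNReal.ofReal (δ/48) := by
    have hmeas : MeasurableSet (s₂ • E₀ ∩ B) := (hE₀m.const_smul s₂).inter hB
    have hbd : μ (s₂ • E₀ ∩ B) ≤ ENNReal.ofReal (δ/48) := by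
      refine mu_bound hp hmeas (by norm_num : (0:ℝ) < 1/4) hη ?_ ?_ T₂
        (key1.trans hm1) (key1.trans hmδ)
      · intro t ht
        have hinv : s₂⁻¹ * t ∈ E₀ := (hsmul_mem s₂ t E₀).1 ht.1
        have hy1 : ‖y (s₂⁻¹ * t) - 1‖ ≤ 1/4 := (hE₀y _ hinv).1
        have h34 := norm_ge_of_close 1 2 hy1
        have hn : ‖(1:ℂ) - 2‖ = 1 := by norm_num
        rw [hn] at h34
        have hc : chiC B 2 t = 2 := Set.indicator_of_mem ht.2 _
        show (1:ℝ)/4 ≤ ‖f₂ t‖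
        simp only [hf₂def, hc]
        linarith
      · intro t ht; exact ht.2.2
    calc μ (E₀ ∩ s₂⁻¹ • B) = μ (s₂ • (E₀ ∩ s₂⁻¹ • B)) :=
          (MeasureTheory.measure_smul μ s₂ _).symm
      _ = μ (s₂ • E₀ ∩ B) := by rw [Set.smul_set_inter, smul_inv_smul]
      _ ≤ _ := hbd
  have hμ₄ : μ (E₁ ∩ s₂ • B) ≤ ENNReal.ofReal (δ/48) := by
    have hmeas : MeasurableSet (s₂⁻¹ • E₁ ∩ B) := (hE₁m.const_smul s₂⁻¹).inter hB
    have hbd : μ (s₂⁻¹ • E₁ ∩ B) ≤ ENNReal.ofReal (δ/48) := by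
      refine mu_bound hp hmeas (by norm_num : (0:ℝ) < 1/4) hη ?_ ?_ T₁
        (key1.trans hm1) (key1.trans hmδ)
      · intro t ht
        have hs₂t : s₂ * t ∈ E₁ := by
          have := (hsmul_mem s₂⁻¹ t E₁).1 ht.1
          rwa [inv_inv] at this
        have hy2 : ‖y (s₂⁻¹ * (s₂ * t)) - 2‖ ≤ 1/2 := (hE₀y _ (hE₁E₀ hs₂t)).2
        rw [inv_mul_cancel_left] at hy2
        have h12 := norm_ge_of_close 2 1 hy2
        have hn : ‖(2:ℂ) - 1‖ = 1 := by norm_num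
        rw [hn] at h12
        have hc : chiC B 1 t = 1 := Set.indicator_of_mem ht.2 _
        show (1:ℝ)/4 ≤ ‖f₁ t‖
        simp only [hf₁def, hc]
        linarith
      · intro t ht; exact ht.2.2
    calc μ (E₁ ∩ s₂ • B) = μ (s₂⁻¹ • (E₁ ∩ s₂ • B)) :=
          (MeasureTheory.measure_smul μ s₂⁻¹ _).symm
      _ = μ (s₂⁻¹ • E₁ ∩ B) := by rw [Set.smul_set_inter, inv_smul_smul]
      _ ≤ _ := hbd
  have hμ₅ : μ bad₅ ≤ ENNReal.ofReal (δ/48) := by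
    have hmeas : MeasurableSet (s₂ • bad₅) := hbad₅m.const_smul s₂
    have hbd : μ (s₂ • bad₅) ≤ ENNReal.ofReal (δ/48) := by
      refine mu_bound hp hmeas (by norm_num : (0:ℝ) < 1/2) (by linarith : (0:ℝ) < δ/2) ?_ ?_ T₂
        (key2.trans hm1) (key2.trans hmδ)
      · intro t ht
        have hinv : s₂⁻¹ * t ∈ bad₅ := (hsmul_mem s₂ t bad₅).1 ht
        have hE₂mem : s₂⁻¹ * t ∈ E₂ := hinv.1
        have htB : t ∉ B := by
          intro htB
          have : s₂⁻¹ * t ∈ s₂⁻¹ • B := by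
            rw [hsmul_mem]; rwa [inv_inv, mul_inv_cancel_left]
          exact (hE₂E₁ hE₂mem).2 this
        have hy1 : ‖y (s₂⁻¹ * t) - 1‖ ≤ 1/4 := (hE₀y _ (hE₂E₀ hE₂mem)).1
        have h34 := norm_ge_of_close 1 0 hy1
        have hn : ‖(1:ℂ) - 0‖ = 1 := by norm_num
        rw [hn] at h34
        have hc : chiC B 2 t = 0 := Set.indicator_of_notMem htB _
        show (1:ℝ)/2 ≤ ‖f₂ t‖
        simp only [hf₂def, hc, sub_zero]
        have : ‖y (s₂⁻¹ * t) - 0‖ = ‖y (s₂⁻¹ * t)‖ := by rw [sub_zero]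
        rw [this] at h34
        linarith
      · intro t ht
        have hinv : s₂⁻¹ * t ∈ bad₅ := (hsmul_mem s₂ t bad₅).1 ht
        have := hinv.2
        rwa [mul_inv_cancel_left] at this
    calc μ bad₅ = μ (s₂ • bad₅) := (MeasureTheory.measure_smul μ s₂ _).symm
      _ ≤ _ := hbd
  have hμ₆ : μ bad₆ ≤ ENNReal.ofReal (δ/48) := by
    have hmeas : MeasurableSet (s₂⁻¹ • bad₆) := hbad₆m.const_smul s₂⁻¹
    have hbd : μ (s₂⁻¹ • bad₆) ≤ ENNReal.ofReal (δ/48) := by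
      refine mu_bound hp hmeas (by norm_num : (0:ℝ) < 1/2) (by linarith : (0:ℝ) < δ/2) ?_ ?_ T₁
        (key2.trans hm1) (key2.trans hmδ)
      · intro t ht
        have hs₂t : s₂ * t ∈ bad₆ := by
          have := (hsmul_mem s₂⁻¹ t bad₆).1 ht
          rwa [inv_inv] at this
        have hE₂mem : s₂ * t ∈ E₂ := hs₂t.1
        have htB : t ∉ B := by
          intro htB
          have : s₂ * t ∈ s₂ • B := by rw [hsmul_mem, inv_mul_cancel_left]; exact htB
          exact hE₂mem.2 this
        have hy2 : ‖y (s₂⁻¹ * (s₂ * t)) - 2‖ ≤ 1/2 := (hE₀y _ (hE₂E₀ hE₂mem)).2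
        rw [inv_mul_cancel_left] at hy2
        have h32 := norm_ge_of_close 2 0 hy2
        have hn : ‖(2:ℂ) - 0‖ = 2 := by norm_num
        rw [hn] at h32
        have hc : chiC B 1 t = 0 := Set.indicator_of_notMem htB _
        show (1:ℝ)/2 ≤ ‖f₁ t‖
        simp only [hf₁def, hc, sub_zero]
        have : ‖y t - 0‖ = ‖y t‖ := by rw [sub_zero]
        rw [this] at h32
        linarith
      · intro t ht
        have hs₂t : s₂ * t ∈ bad₆ := by
          have := (hsmul_mem s₂⁻¹ t bad₆).1 ht
          rwa [inv_inv] at this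
        have := hs₂t.2
        rwa [inv_mul_cancel_left] at this
    calc μ bad₆ = μ (s₂⁻¹ • bad₆) := (MeasureTheory.measure_smul μ s₂⁻¹ _).symm
      _ ≤ _ := hbd
  -- total bound on the removed part
  have hsub : F' \ E₃ ⊆ (F' \ B) ∪ (A₁ ∪ (A₂ ∪ ((E₀ ∩ s₂⁻¹ • B) ∪
      ((E₁ ∩ s₂ • B) ∪ (bad₅ ∪ bad₆))))) := by
    rintro t ⟨htF, htE⟩
    by_cases h1 : t ∈ B
    swap
    · exact Or.inl ⟨htF, h1⟩
    refine Or.inr ?_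
    by_cases h2 : t ∈ A₁
    · exact Or.inl h2
    refine Or.inr ?_
    by_cases h3 : t ∈ A₂
    · exact Or.inl h3
    refine Or.inr ?_
    have hE0 : t ∈ E₀ := ⟨h1, fun hc => hc.elim h2 h3⟩
    by_cases h4 : t ∈ s₂⁻¹ • B
    · exact Or.inl ⟨hE0, h4⟩
    refine Or.inr ?_
    have hE1 : t ∈ E₁ := ⟨hE0, h4⟩
    by_cases h5 : t ∈ s₂ • B
    · exact Or.inl ⟨hE1, h5⟩
    refine Or.inr ?_
    have hE2 : t ∈ E₂ := ⟨hE1, h5⟩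
    by_contra hbad
    exact htE ⟨hE2, hbad⟩
  have hstep : ∀ (X Y : Set G) (a b : ℝ≥0∞), μ X ≤ a → μ Y ≤ b → μ (X ∪ Y) ≤ a + b :=
    fun X Y a b hX hY => (measure_union_le X Y).trans (add_le_add hX hY)
  have hμBad : μ (F' \ E₃) < ENNReal.ofReal (3*δ/8) := by
    have hsum : μ (F' \ E₃) ≤ ENNReal.ofReal (δ/8) + (ENNReal.ofReal (δ/48) +
        (ENNReal.ofReal (δ/48) + (ENNReal.ofReal (δ/48) + (ENNReal.ofReal (δ/48) +
        (ENNReal.ofReal (δ/48) + ENNReal.ofReal (δ/48)))))) := by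
      refine (measure_mono hsub).trans ?_
      refine hstep _ _ _ _ hFB.le ?_
      refine hstep _ _ _ _ hμA₁ ?_
      refine hstep _ _ _ _ hμA₂ ?_
      refine hstep _ _ _ _ hμ₃ ?_
      refine hstep _ _ _ _ hμ₄ ?_
      exact hstep _ _ _ _ hμ₅ hμ₆
    have h48 : (0:ℝ) ≤ δ/48 := by linarith
    have hmerge : ENNReal.ofReal (δ/8) + (ENNReal.ofReal (δ/48) +
        (ENNReal.ofReal (δ/48) + (ENNReal.ofReal (δ/48) + (ENNReal.ofReal (δ/48) +
        (ENNReal.ofReal (δ/48) + ENNReal.ofReal (δ/48)))))) = ENNReal.ofReal (δ/4) := by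
      rw [← ENNReal.ofReal_add h48 h48, ← ENNReal.ofReal_add h48 (by linarith),
        ← ENNReal.ofReal_add h48 (by linarith), ← ENNReal.ofReal_add h48 (by linarith),
        ← ENNReal.ofReal_add h48 (by linarith), ← ENNReal.ofReal_add (by linarith) (by linarith)]
      congr 1
      ring
    rw [hmerge] at hsum
    refine lt_of_le_of_lt hsum ?_
    rw [ENNReal.ofReal_lt_ofReal_iff (by linarith)]
    linarith
  -- pointwise smallness of `ω` on the translates of `E₃`
  have hE₃pt : ∀ t ∈ E₃, ω (s₂ * t) < δ/2 ∧ ω (s₂⁻¹ * t) < δ/2 := by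
    intro t ht
    constructor
    · by_contra hc; push_neg at hc
      exact ht.2 (Or.inl ⟨ht.1, hc⟩)
    · by_contra hc; push_neg at hc
      exact ht.2 (Or.inr ⟨ht.1, hc⟩)
  -- outer regularity: an open set covering the bad part
  obtain ⟨U, hUsup, hUopen, hUμ⟩ := Set.exists_isOpen_lt_of_lt (F' \ E₃) _ hμBad
  refine ⟨s₂, hs₂S, F \ U, hF.diff hUopen, Set.diff_subset, ?_, ?_⟩
  · -- μ (F \ (F \ U)) < δ
    have hsubU : F \ (F \ U) ⊆ U := by
      rintro t ⟨htF, htn⟩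
      by_contra hc
      exact htn ⟨htF, hc⟩
    calc μ (F \ (F \ U)) ≤ μ U := measure_mono hsubU
      _ < ENNReal.ofReal (3*δ/8) := hUμ
      _ ≤ ENNReal.ofReal δ := ENNReal.ofReal_le_ofReal (by linarith)
  · -- essential sup bound
    have hEE₃ : F \ U ⊆ E₃ := by
      rintro t ⟨htF, htU⟩
      by_contra hc
      exact htU (hUsup ⟨hFF' htF, hc⟩)
    have hW : MeasurableSet (s₂ • E₃ ∪ s₂⁻¹ • E₃) :=
      (hE₃m.const_smul s₂).union (hE₃m.const_smul s₂⁻¹)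
    have hWsub : (s₂ • (F \ U) ∪ s₂⁻¹ • (F \ U)) ⊆ (s₂ • E₃ ∪ s₂⁻¹ • E₃) :=
      Set.union_subset_union (Set.smul_set_mono hEE₃) (Set.smul_set_mono hEE₃)
    have hmono : essSup (fun t => ENNReal.ofReal (ω t))
          (μ.restrict (s₂ • (F \ U) ∪ s₂⁻¹ • (F \ U)))
        ≤ essSup (fun t => ENNReal.ofReal (ω t)) (μ.restrict (s₂ • E₃ ∪ s₂⁻¹ • E₃)) :=
      essSup_mono_measure (Measure.absolutelyContinuous_of_le (Measure.restrict_mono hWsub le_rfl))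
    have hbound : essSup (fun t => ENNReal.ofReal (ω t)) (μ.restrict (s₂ • E₃ ∪ s₂⁻¹ • E₃))
        ≤ ENNReal.ofReal (δ/2) := by
      refine essSup_le_of_ae_le _ ((ae_restrict_iff' hW).2 (Filter.Eventually.of_forall
        fun t ht => ?_))
      refine ENNReal.ofReal_le_ofReal ?_
      rcases ht with ht | ht
      · have hinv : s₂⁻¹ * t ∈ E₃ := (hsmul_mem s₂ t E₃).1 ht
        have h := (hE₃pt _ hinv).1
        rw [mul_inv_cancel_left] at h
        linarith
      · have hs₂t : s₂ * t ∈ E₃ := by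
          have := (hsmul_mem s₂⁻¹ t E₃).1 ht
          rwa [inv_inv] at this
        have h := (hE₃pt _ hs₂t).2
        rw [inv_mul_cancel_left] at h
        linarith
    exact lt_of_le_of_lt (hmono.trans hbound)
      ((ENNReal.ofReal_lt_ofReal_iff hδ).2 (by linarith))
end
end
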